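/- arXiv:2505.18535 — 2 statements merged into one kernel-verified Lean document; each statement's English description precedes it below -/
import Mathlib

section
/- Let $(X_n)_{n\geq 0}$ be the runaway random walk: $X_0=0$ and $X_n = X_{n-1} + (\xi_n - c_l)$ if $X_{n-1}<0$, $X_n = X_{n-1} + (\xi_n + c_r)$ if $X_{n-1}\geq 0$, where $(\xi_n)$ are i.i.d. with mean zero and $c_l,c_r>0$. Define the alternating crossing times $\tau_0^{\uparrow}=0$, $\tau_{2k-1}^{\downarrow} = \inf\{j>\tau_{2k-2}^{\uparrow}: X_j<0\}$, $\tau_{2k}^{\uparrow} = \inf\{j>\tau_{2k-1}^{\downarrow}: X_j\geq 0\}$. Then for all $k\geq 1$: $\mathbb{P}(\tau_{2k-1}^{\downarrow}<\infty) \leq p_{\downarrow}^k p_{\uparrow}^{k-1}$ and $\mathbb{P}(\tau_{2k}^{\uparrow}<\infty) \leq (p_{\downarrow}p_{\uparrow})^k$, where $p_{\downarrow} = \mathbb{P}\left(\inf_{n\geq 1}\sum_{j=1}^n(\xi_j+c_r) < 0\right)$ and $p_{\uparrow} = \mathbb{P}\left(\sup_{n\geq 1}\sum_{j=1}^n(\xi_j-c_l)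 \geq 0\right)$. -/
open MeasureTheory ProbabilityTheory Filter Finset

open Classical in
lemma rw_sInf_shape (T : ℕ → Prop) :
    sInf {j : ℕ∞ | ∃ m : ℕ, j = (m : ℕ∞) ∧ T m}
      = if h : ∃ m, T m then ((sInf {m | T m} : ℕ) : ℕ∞) else ⊤ := by
  split_ifs with h
  · apply le_antisymm
    · exact sInf_le ⟨_, rfl, Nat.sInf_mem h⟩
    · apply le_sInf
      rintro j ⟨m, rfl, hm⟩
      exact_mod_cast Nat.sInf_le hm
  · have : {j : ℕ∞ | ∃ m : ℕ, j = (m : ℕ∞) ∧ T m} = ∅ := by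
      ext j
      simp only [Set.mem_setOf_eq, Set.mem_empty_iff_false, iff_false, not_exists]
      rintro m ⟨rfl, hm⟩
      exact h ⟨m, hm⟩
    rw [this, sInf_empty]

lemma rw_sInf_eq_coe_iff (T : ℕ → Prop) (t : ℕ) :
    sInf {j : ℕ∞ | ∃ m : ℕ, j = (m : ℕ∞) ∧ T m} = (t : ℕ∞) ↔ (T t ∧ ∀ m, T m → t ≤ m) := by
  rw [rw_sInf_shape]
  split_ifs with h
  · rw [Nat.cast_inj]
    constructor
    · rintro rfl
      exact ⟨Nat.sInf_mem h, fun m hm => Nat.sInf_le hm⟩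
    · rintro ⟨ht, hlb⟩
      exact le_antisymm (Nat.sInf_le ht) (hlb _ (Nat.sInf_mem h))
  · simp only [(ENat.coe_ne_top t).symm, false_iff, not_and]
    intro ht
    exact absurd ⟨t, ht⟩ h

lemma rw_sInf_ne_top_iff (T : ℕ → Prop) :
    sInf {j : ℕ∞ | ∃ m : ℕ, j = (m : ℕ∞) ∧ T m} ≠ ⊤ ↔ ∃ m, T m := by
  rw [rw_sInf_shape]
  split_ifs with h <;> simp [h]

lemma rw_lt_coe_iff (x : ℕ∞) (m : ℕ) : x < (m : ℕ∞) ↔ ∃ s : ℕ, x = (s : ℕ∞) ∧ s < m := by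
  cases x with
  | top => simp [lt_irrefl]
  | coe s =>
    simp only [Nat.cast_lt, Nat.cast_inj]
    constructor
    · intro h; exact ⟨s, rfl, h⟩
    · rintro ⟨s', rfl, h⟩; exact h

def Gfam {Ω : Type*} (ξ : ℕ → Ω → ℝ) (t : ℕ) : MeasurableSpace Ω :=
  MeasurableSpace.comap (fun ω (i : Fin (t + 1)) => ξ i ω) inferInstance

lemma Gfam_mono {Ω : Type*} (ξ : ℕ → Ω → ℝ) {s t : ℕ} (hst : s ≤ t) :
    Gfam ξ s ≤ Gfam ξ t := by
  intro S hS
  obtain ⟨S', hS', rfl⟩ := hS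
  refine ⟨(fun y : Fin (t + 1) → ℝ => fun i : Fin (s + 1) => y ⟨i, by omega⟩) ⁻¹' S',
    (measurable_pi_lambda _ fun i => measurable_pi_apply _) hS', rfl⟩

lemma Gfam_le {Ω : Type*} [m : MeasurableSpace Ω] (ξ : ℕ → Ω → ℝ)
    (hmeas : ∀ i, Measurable (ξ i)) (t : ℕ) : Gfam ξ t ≤ m := by
  rw [Gfam, MeasurableSpace.comap_le_iff_le_map, ← measurable_iff_le_map]
  exact measurable_pi_lambda _ fun i => hmeas i

lemma Gfam_meas_xi {Ω : Type*} (ξ : ℕ → Ω → ℝ) {n t : ℕ} (hnt : n ≤ t) :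
    Measurable[Gfam ξ t] (ξ n) := by
  have : ξ n = (fun y : Fin (t + 1) → ℝ => y ⟨n, by omega⟩) ∘ (fun ω (i : Fin (t + 1)) => ξ i ω) :=
    rfl
  rw [this]
  exact (measurable_pi_apply _).comp (Measurable.of_comap_le le_rfl)

lemma cross_char {Ω : Type*} (σ : Ω → ℕ∞) (p : ℕ → Ω → Prop) (τ : Ω → ℕ∞)
    (hτ : ∀ ω, τ ω = sInf {j : ℕ∞ | ∃ m : ℕ, j = (m : ℕ∞) ∧ σ ω < (m : ℕ∞) ∧ p m ω})
    (ω : Ω) (t : ℕ) :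
    τ ω = (t : ℕ∞) ↔ ((σ ω < (t : ℕ∞) ∧ p t ω) ∧ ∀ m : ℕ, σ ω < (m : ℕ∞) → p m ω → t ≤ m) := by
  rw [hτ, rw_sInf_eq_coe_iff (fun m => σ ω < (m : ℕ∞) ∧ p m ω)]
  constructor
  · rintro ⟨h1, h2⟩; exact ⟨h1, fun m hm hp => h2 m ⟨hm, hp⟩⟩
  · rintro ⟨h1, h2⟩; exact ⟨h1, fun m ⟨hm, hp⟩ => h2 m hm hp⟩

lemma cross_ne_top {Ω : Type*} (σ : Ω → ℕ∞) (p : ℕ → Ω → Prop) (τ : Ω → ℕ∞)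
    (hτ : ∀ ω, τ ω = sInf {j : ℕ∞ | ∃ m : ℕ, j = (m : ℕ∞) ∧ σ ω < (m : ℕ∞) ∧ p m ω})
    (ω : Ω) :
    τ ω ≠ ⊤ ↔ ∃ m : ℕ, σ ω < (m : ℕ∞) ∧ p m ω := by
  rw [hτ, rw_sInf_ne_top_iff]

lemma sigma_lt_coe_set {Ω : Type*} (σ : Ω → ℕ∞) (m : ℕ) :
    {ω | σ ω < (m : ℕ∞)} = ⋃ s ∈ Finset.range m, {ω | σ ω = (s : ℕ∞)} := by
  ext ω
  simp only [Set.mem_setOf_eq, Set.mem_iUnion, Finset.mem_range, rw_lt_coe_iff]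
  constructor
  · rintro ⟨s, hs, hlt⟩; exact ⟨s, hlt, hs⟩
  · rintro ⟨s, hlt, hs⟩; exact ⟨s, hs, hlt⟩

lemma cross_meas {Ω : Type*} (G : ℕ → MeasurableSpace Ω) (hG : ∀ s t : ℕ, s ≤ t → G s ≤ G t)
    (σ : Ω → ℕ∞) (hσ : ∀ t : ℕ, MeasurableSet[G t] {ω | σ ω = (t : ℕ∞)})
    (p : ℕ → Ω → Prop) (hp : ∀ m, MeasurableSet[G m] {ω | p m ω})
    (τ : Ω → ℕ∞)
    (hτ : ∀ ω, τ ω = sInf {j : ℕ∞ | ∃ m : ℕ, j = (m : ℕ∞) ∧ σ ω < (m : ℕ∞) ∧ p m ω}) :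
    ∀ t : ℕ, MeasurableSet[G t] {ω | τ ω = (t : ℕ∞)} := by
  intro t
  have hlt : ∀ m : ℕ, m ≤ t → MeasurableSet[G t] {ω | σ ω < (m : ℕ∞)} := by
    intro m hm
    have : {ω | σ ω < (m : ℕ∞)} = ⋃ s ∈ Set.Iio m, {ω | σ ω = (s : ℕ∞)} := by
      rw [sigma_lt_coe_set]
      ext ω
      simp [Set.mem_Iio]
    rw [this]
    refine MeasurableSet.biUnion (Set.Iio m).to_countable fun s hs => ?_
    rw [Set.mem_Iio] at hs
    exact hG s t (by omega) _ (hσ s)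
  have hset : {ω | τ ω = (t : ℕ∞)} =
      ({ω | σ ω < (t : ℕ∞)} ∩ {ω | p t ω}) ∩
        ⋂ m ∈ Set.Iio t, ({ω | σ ω < (m : ℕ∞)} ∩ {ω | p m ω})ᶜ := by
    ext ω
    simp only [Set.mem_inter_iff, Set.mem_setOf_eq, Set.mem_iInter, Set.mem_compl_iff,
      Set.mem_Iio, cross_char σ p τ hτ ω t]
    constructor
    · rintro ⟨h1, h2⟩
      refine ⟨h1, fun m hm ⟨ha, hb⟩ => ?_⟩
      exact absurd (h2 m ha hb) (by omega)
    · rintro ⟨h1, h2⟩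
      refine ⟨h1, fun m ha hb => ?_⟩
      by_contra hc
      exact h2 m (by omega) ⟨ha, hb⟩
  rw [hset]
  refine MeasurableSet.inter ((hlt t le_rfl).inter (hp t)) ?_
  refine MeasurableSet.biInter (Set.Iio t).to_countable fun m hm => ?_
  rw [Set.mem_Iio] at hm
  exact (((hlt m (by omega)).inter (hG m t (by omega) _ (hp m)))).compl

lemma step_lemma {Ω : Type*} [MeasurableSpace Ω] (P : Measure Ω) [IsProbabilityMeasure P]
    (ξ : ℕ → Ω → ℝ) (hmeas : ∀ i, Measurable (ξ i))
    (hindep : iIndepFun ξ P)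
    (hident : ∀ i, IdentDistrib (ξ i) (ξ 0) P P)
    (θ : ℝ) (q : ℝ → Prop) (hq : MeasurableSet {r | q r})
    (σ : Ω → ℕ∞)
    (hσ : ∀ t : ℕ, MeasurableSet[Gfam ξ t] {ω | σ ω = (t : ℕ∞)})
    (B : Set Ω)
    (hB : ∀ ω ∈ B, ∃ t : ℕ, σ ω = (t : ℕ∞) ∧
        ∃ n : ℕ, 1 ≤ n ∧ q (∑ i ∈ Finset.range n, (ξ (t + 1 + i) ω + θ))) :
    P B ≤ P {ω | ∃ n : ℕ, 1 ≤ n ∧ q (∑ i ∈ Finset.range n, (ξ (0 + 1 + i) ω + θ))}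
          * P {ω | σ ω ≠ ⊤} := by
  classical
  -- the shifted vectors
  set vec : ∀ _ N : ℕ, Ω → (Fin N → ℝ) := fun t N ω i => ξ (t + 1 + i) ω with hvecdef
  have hvec : ∀ t N, Measurable (vec t N) := fun t N =>
    measurable_pi_lambda _ fun i => hmeas _
  -- law of the shifted vectors
  have hlaw : ∀ t N, P.map (vec t N) = Measure.pi (fun _ : Fin N => P.map (ξ 0)) := by
    intro t N
    refine (Measure.pi_eq fun s hs => ?_).symm
    rw [Measure.map_apply (hvec t N) (MeasurableSet.univ_pi hs)]
    have hpre : vec t N ⁻¹' Set.univ.pi s = ⋂ i : Fin N, ξ (t + 1 + i) ⁻¹' s i := by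
      ext ω; simp [hvecdef, Set.mem_univ_pi]
    rw [hpre]
    set sets : ℕ → Set ℝ := fun n => ⋂ (i : Fin N) (_ : t + 1 + (i : ℕ) = n), s i with hsetsdef
    have hsets_meas : ∀ n, MeasurableSet (sets n) := fun n =>
      MeasurableSet.iInter fun i => MeasurableSet.iInter fun _ => hs i
    have hsets_eq : ∀ i : Fin N, sets (t + 1 + (i : ℕ)) = s i := by
      intro i
      ext r
      simp only [hsetsdef, Set.mem_iInter]
      constructor
      · intro h; exact h i rfl
      · intro h j hj
        have : j = i := Fin.ext (by omega)
        rwa [this]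
    have key := hindep.measure_inter_preimage_eq_mul
      (Finset.image (fun i : Fin N => t + 1 + (i : ℕ)) Finset.univ) (sets := sets)
      (fun n _ => hsets_meas n)
    have hII : (⋂ n ∈ Finset.image (fun i : Fin N => t + 1 + (i : ℕ)) Finset.univ,
        ξ n ⁻¹' sets n) = ⋂ i : Fin N, ξ (t + 1 + i) ⁻¹' s i := by
      ext ω
      simp only [Set.mem_iInter, Finset.mem_image, Finset.mem_univ, true_and, Set.mem_preimage]
      constructor
      · intro h i
        have := h (t + 1 + (i : ℕ)) ⟨i, rfl⟩
        rwa [hsets_eq i] at this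
      · rintro h n ⟨i, rfl⟩
        rw [hsets_eq i]
        exact h i
    rw [hII] at key
    rw [key, Finset.prod_image (fun i _ j _ h => Fin.ext (by omega))]
    refine Finset.prod_congr rfl fun i _ => ?_
    rw [hsets_eq i, Measure.map_apply (hmeas 0) (hs i)]
    exact (hident (t + 1 + (i : ℕ))).measure_mem_eq (hs i)
  -- target sets
  set ext0 : ∀ N : ℕ, (Fin N → ℝ) → ℕ → ℝ :=
    fun N x i => if h : i < N then x ⟨i, h⟩ else 0 with hext0def
  set SN : ∀ N : ℕ, Set (Fin N → ℝ) := fun N =>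
    {x | ∃ n, 1 ≤ n ∧ n ≤ N ∧ q (∑ i ∈ Finset.range n, (ext0 N x i + θ))} with hSNdef
  have hext0meas : ∀ (N : ℕ) (i : ℕ), Measurable fun x : Fin N → ℝ => ext0 N x i := by
    intro N i
    simp only [hext0def]
    by_cases h : i < N
    · simp only [dif_pos h]; exact measurable_pi_apply _
    · simp only [dif_neg h]; exact measurable_const
  have hSN : ∀ N, MeasurableSet (SN N) := by
    intro N
    have : SN N = ⋃ (n : ℕ) (_ : 1 ≤ n ∧ n ≤ N),
        (fun x : Fin N → ℝ => ∑ i ∈ Finset.range n, (ext0 N x i + θ)) ⁻¹' {r | q r} := by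
      ext x
      simp only [hSNdef, Set.mem_setOf_eq, Set.mem_iUnion, Set.mem_preimage]
      tauto
    rw [this]
    refine MeasurableSet.iUnion fun n => MeasurableSet.iUnion fun _ => ?_
    exact (Finset.measurable_sum _ fun i _ => (hext0meas N i).add_const θ) hq
  set CC : ℕ → ℕ → Set Ω := fun t N =>
    {ω | ∃ n, 1 ≤ n ∧ n ≤ N ∧ q (∑ i ∈ Finset.range n, (ξ (t + 1 + i) ω + θ))} with hCCdef
  set A : ℕ → Set Ω := fun t =>
    {ω | ∃ n, 1 ≤ n ∧ q (∑ i ∈ Finset.range n, (ξ (t + 1 + i) ω + θ))} with hAdef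
  have hsum0 : ∀ (t N : ℕ) (ω : Ω) (n : ℕ), n ≤ N →
      ∑ i ∈ Finset.range n, (ext0 N (vec t N ω) i + θ)
        = ∑ i ∈ Finset.range n, (ξ (t + 1 + i) ω + θ) := by
    intro t N ω n hn
    refine Finset.sum_congr rfl fun i hi => ?_
    rw [Finset.mem_range] at hi
    simp only [hext0def, hvecdef]
    rw [dif_pos (lt_of_lt_of_le hi hn)]
  have hCCpre : ∀ t N, CC t N = vec t N ⁻¹' SN N := by
    intro t N
    ext ω
    simp only [hCCdef, hSNdef, Set.mem_setOf_eq, Set.mem_preimage]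
    constructor
    · rintro ⟨n, h1, h2, h3⟩
      exact ⟨n, h1, h2, by rwa [hsum0 t N ω n h2]⟩
    · rintro ⟨n, h1, h2, h3⟩
      exact ⟨n, h1, h2, by rwa [hsum0 t N ω n h2] at h3⟩
  have hPCC : ∀ t N, P (CC t N) = P (CC 0 N) := by
    intro t N
    rw [hCCpre, hCCpre, ← Measure.map_apply (hvec t N) (hSN N),
      ← Measure.map_apply (hvec 0 N) (hSN N), hlaw t N, hlaw 0 N]
  have hCCmeas : ∀ t N, MeasurableSet (CC t N) := fun t N => by
    rw [hCCpre]; exact (hvec t N) (hSN N)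
  have hCCmono : ∀ t, Monotone (CC t) := by
    intro t N N' h ω hω
    obtain ⟨n, h1, h2, h3⟩ := hω
    exact ⟨n, h1, le_trans h2 h, h3⟩
  have hAeq : ∀ t, A t = ⋃ N, CC t N := by
    intro t
    ext ω
    simp only [hAdef, hCCdef, Set.mem_setOf_eq, Set.mem_iUnion]
    constructor
    · rintro ⟨n, h1, h2⟩; exact ⟨n, n, h1, le_rfl, h2⟩
    · rintro ⟨N, n, h1, h2, h3⟩; exact ⟨n, h1, h3⟩
  have hPA : ∀ t, P (A t) = ⨆ N, P (CC t N) := fun t => by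
    rw [hAeq t]; exact (hCCmono t).measure_iUnion
  -- independence step
  have hstep : ∀ (t N : ℕ), P ({ω | σ ω = (t : ℕ∞)} ∩ CC t N)
      = P {ω | σ ω = (t : ℕ∞)} * P (CC t N) := by
    intro t N
    obtain ⟨S', hS'm, hS'⟩ := hσ t
    have hdisj : Disjoint (Finset.range (t + 1)) (Finset.Icc (t + 1) (t + N)) := by
      rw [Finset.disjoint_left]
      intro a ha hb
      rw [Finset.mem_range] at ha
      rw [Finset.mem_Icc] at hb
      omega
    have h1 := hindep.indepFun_finset (Finset.range (t + 1)) (Finset.Icc (t + 1) (t + N))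
      hdisj hmeas
    set φ : ((_ : (Finset.range (t + 1) : Finset ℕ)) → ℝ) → (Fin (t + 1) → ℝ) :=
      fun y i => y ⟨(i : ℕ), Finset.mem_range.mpr i.isLt⟩ with hφdef
    set ψ : ((_ : (Finset.Icc (t + 1) (t + N) : Finset ℕ)) → ℝ) → (Fin N → ℝ) :=
      fun y i => y ⟨t + 1 + (i : ℕ), Finset.mem_Icc.mpr ⟨by omega, by have := i.isLt; omega⟩⟩
        with hψdef
    have hφ : Measurable φ := measurable_pi_lambda _ fun i => measurable_pi_apply _
    have hψ : Measurable ψ := measurable_pi_lambda _ fun i => measurable_pi_apply _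
    have h2 := h1.comp hφ hψ
    have hcomp1 : φ ∘ (fun a (i : (Finset.range (t + 1) : Finset ℕ)) => ξ i a)
        = fun ω (i : Fin (t + 1)) => ξ i ω := rfl
    have hcomp2 : ψ ∘ (fun a (i : (Finset.Icc (t + 1) (t + N) : Finset ℕ)) => ξ i a)
        = vec t N := rfl
    rw [hcomp1, hcomp2] at h2
    have key := h2.measure_inter_preimage_eq_mul S' (SN N) hS'm (hSN N)
    rw [hCCpre, ← hS']
    exact key
  -- ambient measurability of the level sets of σ
  have hσamb : ∀ t : ℕ, MeasurableSet {ω | σ ω = (t : ℕ∞)} := fun t =>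
    Gfam_le ξ hmeas t _ (hσ t)
  -- main computation
  have hsub : B ⊆ ⋃ t : ℕ, ({ω | σ ω = (t : ℕ∞)} ∩ A t) := by
    intro ω hω
    obtain ⟨t, h1, n, h2, h3⟩ := hB ω hω
    exact Set.mem_iUnion.mpr ⟨t, h1, ⟨n, h2, h3⟩⟩
  have hmain : P B ≤ P (A 0) * P {ω | σ ω ≠ ⊤} := by
    calc P B ≤ P (⋃ t : ℕ, ({ω | σ ω = (t : ℕ∞)} ∩ A t)) := measure_mono hsub
      _ ≤ ∑' t : ℕ, P ({ω | σ ω = (t : ℕ∞)} ∩ A t) := measure_iUnion_le _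
      _ = ∑' t : ℕ, P {ω | σ ω = (t : ℕ∞)} * P (A 0) := by
          refine tsum_congr fun t => ?_
          have hI : {ω | σ ω = (t : ℕ∞)} ∩ A t = ⋃ N, ({ω | σ ω = (t : ℕ∞)} ∩ CC t N) := by
            rw [hAeq t, Set.inter_iUnion]
          rw [hI,
            Monotone.measure_iUnion (fun N N' h => Set.inter_subset_inter_right _ (hCCmono t h))]
          calc (⨆ N, P ({ω | σ ω = (t : ℕ∞)} ∩ CC t N))
              = ⨆ N, P {ω | σ ω = (t : ℕ∞)} * P (CC t N) := iSup_congr fun N => hstep t N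
            _ = P {ω | σ ω = (t : ℕ∞)} * ⨆ N, P (CC t N) := (ENNReal.mul_iSup _ _).symm
            _ = P {ω | σ ω = (t : ℕ∞)} * ⨆ N, P (CC 0 N) := by
                congr 1
                exact iSup_congr fun N => hPCC t N
            _ = P {ω | σ ω = (t : ℕ∞)} * P (A 0) := by rw [hPA 0]
      _ = (∑' t : ℕ, P {ω | σ ω = (t : ℕ∞)}) * P (A 0) := ENNReal.tsum_mul_right
      _ = P (⋃ t : ℕ, {ω | σ ω = (t : ℕ∞)}) * P (A 0) := by
          rw [measure_iUnion ?_ hσamb]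
          intro s t hst
          rw [Function.onFun]
          refine Set.disjoint_left.mpr fun ω h1 h2 => hst ?_
          simp only [Set.mem_setOf_eq] at h1 h2
          exact_mod_cast h1.symm.trans h2
      _ = P {ω | σ ω ≠ ⊤} * P (A 0) := by
          have huni : (⋃ t : ℕ, {ω | σ ω = (t : ℕ∞)}) = {ω | σ ω ≠ ⊤} := by
            ext ω
            simp only [Set.mem_iUnion, Set.mem_setOf_eq, Ne]
            constructor
            · rintro ⟨t, ht⟩ htop
              rw [ht] at htop
              exact (ENat.coe_ne_top t) htop
            · intro h
              obtain ⟨t, ht⟩ := WithTop.ne_top_iff_exists.mp h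
              exact ⟨t, ht.symm⟩
          rw [huni]
      _ = P (A 0) * P {ω | σ ω ≠ ⊤} := mul_comm _ _
  simpa only [hAdef] using hmain

theorem stmt8 {Ω : Type*} [MeasurableSpace Ω] (P : Measure Ω) [IsProbabilityMeasure P]
    (ξ : ℕ → Ω → ℝ) (hmeas : ∀ i, Measurable (ξ i))
    (hindep : iIndepFun ξ P)
    (hident : ∀ i, IdentDistrib (ξ i) (ξ 0) P P)
    (hint : Integrable (ξ 0) P) (hmean : P[ξ 0] = 0)
    (cl cr : ℝ) (hcl : 0 < cl) (hcr : 0 < cr)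
    (X : ℕ → Ω → ℝ) (hX0 : ∀ ω, X 0 ω = 0)
    (hXrec : ∀ n ω, X (n + 1) ω =
      if X n ω < 0 then X n ω + (ξ (n + 1) ω - cl) else X n ω + (ξ (n + 1) ω + cr))
    -- τu k is the crossing time τ_{2k}^↑ ; τd (k+1) is the crossing time τ_{2k+1}^↓
    (τu τd : ℕ → Ω → ℕ∞)
    (hτu0 : ∀ ω, τu 0 ω = 0)
    (hτd : ∀ k ω, τd (k + 1) ω =
      sInf {j : ℕ∞ | ∃ m : ℕ, j = (m : ℕ∞) ∧ τu k ω < (m : ℕ∞) ∧ X m ω < 0})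
    (hτu : ∀ k ω, τu (k + 1) ω =
      sInf {j : ℕ∞ | ∃ m : ℕ, j = (m : ℕ∞) ∧ τd (k + 1) ω < (m : ℕ∞) ∧ 0 ≤ X m ω})
    (pd pu : ℝ)
    (hpd : pd = (P {ω | ∃ n ≥ 1, (∑ j ∈ Icc 1 n, (ξ j ω + cr)) < 0}).toReal)
    (hpu : pu = (P {ω | ∃ n ≥ 1, 0 ≤ ∑ j ∈ Icc 1 n, (ξ j ω - cl)}).toReal) :
    ∀ k : ℕ, 1 ≤ k →
      (P {ω | τd k ω ≠ ⊤}).toReal ≤ pd ^ k * pu ^ (k - 1) ∧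
      (P {ω | τu k ω ≠ ⊤}).toReal ≤ (pd * pu) ^ k := by
  -- measurability of the walk w.r.t. the natural filtration
  have hXmeas : ∀ t, Measurable[Gfam ξ t] (X t) := by
    intro t
    induction t with
    | zero =>
      have h0 : X 0 = fun _ => (0 : ℝ) := funext hX0
      rw [h0]; exact measurable_const
    | succ t ih =>
      have hXt : Measurable[Gfam ξ (t + 1)] (X t) :=
        ih.mono (Gfam_mono ξ (by omega)) le_rfl
      have hξ : Measurable[Gfam ξ (t + 1)] (ξ (t + 1)) := Gfam_meas_xi ξ le_rfl
      have hcond : MeasurableSet[Gfam ξ (t + 1)] {ω | X t ω < 0} :=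
        measurableSet_lt hXt measurable_const
      have hXs : X (t + 1) = fun ω =>
          if X t ω < 0 then X t ω + (ξ (t + 1) ω - cl) else X t ω + (ξ (t + 1) ω + cr) :=
        funext (hXrec t)
      rw [hXs]
      exact Measurable.ite hcond (hXt.add (hξ.sub measurable_const))
        (hXt.add (hξ.add measurable_const))
  have hXlev_neg : ∀ m, MeasurableSet[Gfam ξ m] {ω | X m ω < 0} := fun m =>
    measurableSet_lt (hXmeas m) measurable_const
  have hXlev_pos : ∀ m, MeasurableSet[Gfam ξ m] {ω | 0 ≤ X m ω} := fun m =>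
    measurableSet_le measurable_const (hXmeas m)
  -- level sets of the crossing times
  have hτulev : ∀ k (t : ℕ), MeasurableSet[Gfam ξ t] {ω | τu k ω = (t : ℕ∞)} := by
    intro k
    induction k with
    | zero =>
      intro t
      by_cases ht : t = 0
      · subst ht
        have h0 : {ω : Ω | τu 0 ω = ((0 : ℕ) : ℕ∞)} = Set.univ := by
          ext ω; simp [hτu0 ω]
        exact h0 ▸ @MeasurableSet.univ _ (Gfam ξ 0)
      · have h0 : {ω : Ω | τu 0 ω = (t : ℕ∞)} = ∅ := by
          ext ω
          simp only [Set.mem_setOf_eq, Set.mem_empty_iff_false, iff_false]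
          intro h
          rw [hτu0 ω] at h
          exact ht (by exact_mod_cast h.symm)
        exact h0 ▸ @MeasurableSet.empty _ (Gfam ξ t)
    | succ k ih =>
      have hd := cross_meas (Gfam ξ) (fun s t h => Gfam_mono ξ h) (τu k) ih
        (fun m ω => X m ω < 0) hXlev_neg (τd (k + 1)) (hτd k)
      exact cross_meas (Gfam ξ) (fun s t h => Gfam_mono ξ h) (τd (k + 1)) hd
        (fun m ω => 0 ≤ X m ω) hXlev_pos (τu (k + 1)) (hτu k)
  have hτdlev : ∀ k (t : ℕ), MeasurableSet[Gfam ξ t] {ω | τd (k + 1) ω = (t : ℕ∞)} := by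
    intro k
    exact cross_meas (Gfam ξ) (fun s t h => Gfam_mono ξ h) (τu k) (hτulev k)
      (fun m ω => X m ω < 0) hXlev_neg (τd (k + 1)) (hτd k)
  -- sign of the walk at the crossing times
  have hsign_u : ∀ k (t : ℕ) ω, τu k ω = (t : ℕ∞) → 0 ≤ X t ω := by
    intro k t ω h
    cases k with
    | zero =>
      rw [hτu0 ω] at h
      have ht : t = 0 := by exact_mod_cast h.symm
      subst ht
      rw [hX0 ω]
    | succ k =>
      have := (cross_char (τd (k + 1)) (fun m ω => 0 ≤ X m ω) (τu (k + 1)) (hτu k) ω t).mp h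
      exact this.1.2
  have hsign_d : ∀ k (t : ℕ) ω, τd (k + 1) ω = (t : ℕ∞) → X t ω < 0 := by
    intro k t ω h
    have := (cross_char (τu k) (fun m ω => X m ω < 0) (τd (k + 1)) (hτd k) ω t).mp h
    exact this.1.2
  -- telescoping sums
  have telescope_up : ∀ (ω : Ω) (t d : ℕ), (∀ i, t ≤ i → i < t + d → 0 ≤ X i ω) →
      X (t + d) ω = X t ω + ∑ i ∈ Finset.range d, (ξ (t + 1 + i) ω + cr) := by
    intro ω t d
    induction d with
    | zero => intro _; simp
    | succ d ih =>
      intro h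
      have hd : X (t + d) ω = X t ω + ∑ i ∈ Finset.range d, (ξ (t + 1 + i) ω + cr) :=
        ih fun i h1 h2 => h i h1 (by omega)
      have hnonneg : 0 ≤ X (t + d) ω := h (t + d) (by omega) (by omega)
      have hrec : X (t + d + 1) ω = X (t + d) ω + (ξ (t + d + 1) ω + cr) := by
        rw [hXrec (t + d) ω, if_neg (not_lt.mpr hnonneg)]
      have htd : t + (d + 1) = (t + d) + 1 := by omega
      have hidx : t + 1 + d = t + d + 1 := by omega
      rw [htd, hrec, hd, Finset.sum_range_succ, hidx]
      ring
  have telescope_down : ∀ (ω : Ω) (t d : ℕ), (∀ i, t ≤ i → i < t + d → X i ω < 0) →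
      X (t + d) ω = X t ω + ∑ i ∈ Finset.range d, (ξ (t + 1 + i) ω + -cl) := by
    intro ω t d
    induction d with
    | zero => intro _; simp
    | succ d ih =>
      intro h
      have hd : X (t + d) ω = X t ω + ∑ i ∈ Finset.range d, (ξ (t + 1 + i) ω + -cl) :=
        ih fun i h1 h2 => h i h1 (by omega)
      have hneg : X (t + d) ω < 0 := h (t + d) (by omega) (by omega)
      have hrec : X (t + d + 1) ω = X (t + d) ω + (ξ (t + d + 1) ω - cl) := by
        rw [hXrec (t + d) ω, if_pos hneg]
      have htd : t + (d + 1) = (t + d) + 1 := by omega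
      have hidx : t + 1 + d = t + d + 1 := by omega
      rw [htd, hrec, hd, Finset.sum_range_succ, hidx]
      ring
  -- inclusion lemmas
  have hinclD : ∀ k, ∀ ω ∈ {ω | τd (k + 1) ω ≠ ⊤}, ∃ t : ℕ, τu k ω = (t : ℕ∞) ∧
      ∃ n, 1 ≤ n ∧ (∑ i ∈ Finset.range n, (ξ (t + 1 + i) ω + cr)) < 0 := by
    intro k ω hω
    simp only [Set.mem_setOf_eq] at hω
    obtain ⟨m0, hm0⟩ := WithTop.ne_top_iff_exists.mp hω
    have hchar := (cross_char (τu k) (fun m ω => X m ω < 0) (τd (k + 1)) (hτd k) ω m0).mp hm0.symm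
    obtain ⟨⟨hlt, hneg⟩, hmin⟩ := hchar
    obtain ⟨t, hteq, htm⟩ := (rw_lt_coe_iff (τu k ω) m0).mp hlt
    have hXt : 0 ≤ X t ω := hsign_u k t ω hteq
    have hmid : ∀ i, t ≤ i → i < m0 → 0 ≤ X i ω := by
      intro i h1 h2
      rcases eq_or_lt_of_le h1 with rfl | h1'
      · exact hXt
      · by_contra hc
        push_neg at hc
        have hlt' : τu k ω < (i : ℕ∞) := by
          rw [hteq]; exact_mod_cast h1'
        have := hmin i hlt' hc
        omega
    have hm0td : m0 = t + (m0 - t) := by omega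
    have htel := telescope_up ω t (m0 - t) (by rw [← hm0td]; exact hmid)
    refine ⟨t, hteq, m0 - t, by omega, ?_⟩
    have hXm0 : X (t + (m0 - t)) ω < 0 := by rw [← hm0td]; exact hneg
    rw [htel] at hXm0
    linarith
  have hinclU : ∀ k, ∀ ω ∈ {ω | τu (k + 1) ω ≠ ⊤}, ∃ t : ℕ, τd (k + 1) ω = (t : ℕ∞) ∧
      ∃ n, 1 ≤ n ∧ 0 ≤ ∑ i ∈ Finset.range n, (ξ (t + 1 + i) ω + -cl) := by
    intro k ω hω
    simp only [Set.mem_setOf_eq] at hω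
    obtain ⟨m0, hm0⟩ := WithTop.ne_top_iff_exists.mp hω
    have hchar := (cross_char (τd (k + 1)) (fun m ω => 0 ≤ X m ω) (τu (k + 1)) (hτu k) ω m0).mp
      hm0.symm
    obtain ⟨⟨hlt, hpos⟩, hmin⟩ := hchar
    obtain ⟨t, hteq, htm⟩ := (rw_lt_coe_iff (τd (k + 1) ω) m0).mp hlt
    have hXt : X t ω < 0 := hsign_d k t ω hteq
    have hmid : ∀ i, t ≤ i → i < m0 → X i ω < 0 := by
      intro i h1 h2
      rcases eq_or_lt_of_le h1 with rfl | h1'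
      · exact hXt
      · by_contra hc
        push_neg at hc
        have hlt' : τd (k + 1) ω < (i : ℕ∞) := by
          rw [hteq]; exact_mod_cast h1'
        have := hmin i hlt' hc
        omega
    have hm0td : m0 = t + (m0 - t) := by omega
    have htel := telescope_down ω t (m0 - t) (by rw [← hm0td]; exact hmid)
    refine ⟨t, hteq, m0 - t, by omega, ?_⟩
    have hXm0 : 0 ≤ X (t + (m0 - t)) ω := by rw [← hm0td]; exact hpos
    rw [htel] at hXm0
    linarith
  -- apply the key step lemma
  have hDstep : ∀ k, P {ω | τd (k + 1) ω ≠ ⊤} ≤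
      P {ω | ∃ n, 1 ≤ n ∧ (∑ i ∈ Finset.range n, (ξ (0 + 1 + i) ω + cr)) < 0}
        * P {ω | τu k ω ≠ ⊤} := fun k =>
    step_lemma P ξ hmeas hindep hident cr (fun r => r < 0)
      (measurableSet_lt measurable_id measurable_const) (τu k) (hτulev k) _ (hinclD k)
  have hUstep : ∀ k, P {ω | τu (k + 1) ω ≠ ⊤} ≤
      P {ω | ∃ n, 1 ≤ n ∧ 0 ≤ ∑ i ∈ Finset.range n, (ξ (0 + 1 + i) ω + -cl)}
        * P {ω | τd (k + 1) ω ≠ ⊤} := fun k =>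
    step_lemma P ξ hmeas hindep hident (-cl) (fun r => 0 ≤ r)
      (measurableSet_le measurable_const measurable_id) (τd (k + 1)) (hτdlev k) _ (hinclU k)
  -- identify the step probabilities
  set pdE : ENNReal := P {ω | ∃ n ≥ 1, (∑ j ∈ Icc 1 n, (ξ j ω + cr)) < 0} with hpdE
  set puE : ENNReal := P {ω | ∃ n ≥ 1, 0 ≤ ∑ j ∈ Icc 1 n, (ξ j ω - cl)} with hpuE
  have hApd : {ω : Ω | ∃ n, 1 ≤ n ∧ (∑ i ∈ Finset.range n, (ξ (0 + 1 + i) ω + cr)) < 0}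
      = {ω : Ω | ∃ n ≥ 1, (∑ j ∈ Icc 1 n, (ξ j ω + cr)) < 0} := by
    ext ω
    simp only [Set.mem_setOf_eq, ge_iff_le]
    have hsum : ∀ n : ℕ, ∑ j ∈ Icc 1 n, (ξ j ω + cr)
        = ∑ i ∈ Finset.range n, (ξ (0 + 1 + i) ω + cr) := by
      intro n
      rw [← Finset.Ico_add_one_right_eq_Icc, Finset.sum_Ico_eq_sum_range]
      simp
    constructor
    · rintro ⟨n, h1, h2⟩; exact ⟨n, h1, by rw [hsum]; exact h2⟩
    · rintro ⟨n, h1, h2⟩; exact ⟨n, h1, by rw [← hsum]; exact h2⟩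
  have hApu : {ω : Ω | ∃ n, 1 ≤ n ∧ 0 ≤ ∑ i ∈ Finset.range n, (ξ (0 + 1 + i) ω + -cl)}
      = {ω : Ω | ∃ n ≥ 1, 0 ≤ ∑ j ∈ Icc 1 n, (ξ j ω - cl)} := by
    ext ω
    simp only [Set.mem_setOf_eq, ge_iff_le]
    have hsum : ∀ n : ℕ, ∑ j ∈ Icc 1 n, (ξ j ω - cl)
        = ∑ i ∈ Finset.range n, (ξ (0 + 1 + i) ω + -cl) := by
      intro n
      rw [← Finset.Ico_add_one_right_eq_Icc, Finset.sum_Ico_eq_sum_range]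
      simp [sub_eq_add_neg]
    constructor
    · rintro ⟨n, h1, h2⟩; exact ⟨n, h1, by rw [hsum]; exact h2⟩
    · rintro ⟨n, h1, h2⟩; exact ⟨n, h1, by rw [← hsum]; exact h2⟩
  have hD : ∀ k, P {ω | τd (k + 1) ω ≠ ⊤} ≤ pdE * P {ω | τu k ω ≠ ⊤} := by
    intro k
    have := hDstep k
    rwa [hApd] at this
  have hU : ∀ k, P {ω | τu (k + 1) ω ≠ ⊤} ≤ puE * P {ω | τd (k + 1) ω ≠ ⊤} := by
    intro k
    have := hUstep k
    rwa [hApu] at this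
  have hu0 : P {ω | τu 0 ω ≠ ⊤} = 1 := by
    have : {ω : Ω | τu 0 ω ≠ ⊤} = Set.univ := by
      ext ω
      simp [hτu0 ω]
    rw [this, measure_univ]
  -- the main induction (in ℝ≥0∞)
  have hEk : ∀ k : ℕ, P {ω | τd (k + 1) ω ≠ ⊤} ≤ pdE ^ (k + 1) * puE ^ k ∧
      P {ω | τu (k + 1) ω ≠ ⊤} ≤ (pdE * puE) ^ (k + 1) := by
    intro k
    induction k with
    | zero =>
      constructor
      · calc P {ω | τd 1 ω ≠ ⊤} ≤ pdE * P {ω | τu 0 ω ≠ ⊤} := hD 0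
          _ = pdE := by rw [hu0, mul_one]
          _ = pdE ^ 1 * puE ^ 0 := by rw [pow_one, pow_zero, mul_one]
      · calc P {ω | τu 1 ω ≠ ⊤} ≤ puE * P {ω | τd 1 ω ≠ ⊤} := hU 0
          _ ≤ puE * (pdE * P {ω | τu 0 ω ≠ ⊤}) := mul_le_mul_right (hD 0) _
          _ = (pdE * puE) ^ 1 := by rw [hu0, mul_one, pow_one, mul_comm]
    | succ k ih =>
      have h1 : P {ω | τd (k + 2) ω ≠ ⊤} ≤ pdE ^ (k + 2) * puE ^ (k + 1) := by
        calc P {ω | τd (k + 2) ω ≠ ⊤} ≤ pdE * P {ω | τu (k + 1) ω ≠ ⊤} := hD (k + 1)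
          _ ≤ pdE * (pdE * puE) ^ (k + 1) := mul_le_mul_right ih.2 _
          _ = pdE ^ (k + 2) * puE ^ (k + 1) := by rw [mul_pow, pow_succ]; ring
      refine ⟨h1, ?_⟩
      calc P {ω | τu (k + 2) ω ≠ ⊤} ≤ puE * P {ω | τd (k + 2) ω ≠ ⊤} := hU (k + 1)
        _ ≤ puE * (pdE ^ (k + 2) * puE ^ (k + 1)) := mul_le_mul_right h1 _
        _ = (pdE * puE) ^ (k + 2) := by rw [mul_pow, pow_succ]; ring
  -- conclusion
  intro k hk
  obtain ⟨j, rfl⟩ : ∃ j, k = j + 1 := ⟨k - 1, by omega⟩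
  have hpd_fin : pdE ≠ ⊤ := measure_ne_top _ _
  have hpu_fin : puE ≠ ⊤ := measure_ne_top _ _
  constructor
  · have h1 := (hEk j).1
    have h2 := ENNReal.toReal_mono
      (ENNReal.mul_ne_top (ENNReal.pow_ne_top hpd_fin) (ENNReal.pow_ne_top hpu_fin)) h1
    rw [ENNReal.toReal_mul, ENNReal.toReal_pow, ENNReal.toReal_pow] at h2
    have hj : j + 1 - 1 = j := by omega
    rw [hj, hpd, hpu]
    exact h2
  · have h1 := (hEk j).2
    have h2 := ENNReal.toReal_mono
      (ENNReal.pow_ne_top (ENNReal.mul_ne_top hpd_fin hpu_fin)) h1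
    rw [ENNReal.toReal_pow, ENNReal.toReal_mul] at h2
    rw [hpd, hpu]
    exact h2
end

section
/- With the runaway random walk $(X_n)$ and crossing times as above, almost surely $X_n$ converges to $+\infty$ or to $-\infty$, and $\mathbb{P}(\lim_n X_n = +\infty) = \sum_{k\geq 0}\left(\mathbb{P}(\tau_{2k}^{\uparrow}<\infty) - \mathbb{P}(\tau_{2k+1}^{\downarrow}<\infty)\right)$ and $\mathbb{P}(\lim_n X_n = -\infty) = \sum_{k\geq 0}\left(\mathbb{P}(\tau_{2k+1}^{\downarrow}<\infty) - \mathbb{P}(\tau_{2k+2}^{\uparrow}<\infty)\right)$. -/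
open MeasureTheory ProbabilityTheory Filter Finset
open Topology ENNReal
open scoped ENNReal



section helpers

lemma enat_lt_coe_iff (a : ℕ∞) (t : ℕ) : a < (t : ℕ∞) ↔ ∃ s : ℕ, a = (s : ℕ∞) ∧ s < t := by
  constructor
  · intro h
    obtain ⟨s, rfl⟩ := WithTop.ne_top_iff_exists.mp h.ne_top
    exact ⟨s, rfl, Nat.cast_lt.mp h⟩
  · rintro ⟨s, rfl, hs⟩
    exact_mod_cast hs

lemma sInf_natSet_eq_top_iff (Q : ℕ → Prop) :
    sInf {j : ℕ∞ | ∃ m : ℕ, j = (m : ℕ∞) ∧ Q m} = ⊤ ↔ ∀ m, ¬ Q m := by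
  constructor
  · intro h m hQ
    have h1 : sInf {j : ℕ∞ | ∃ m : ℕ, j = (m : ℕ∞) ∧ Q m} ≤ (m : ℕ∞) :=
      sInf_le ⟨m, rfl, hQ⟩
    rw [h] at h1
    simp at h1
  · intro h
    have : {j : ℕ∞ | ∃ m : ℕ, j = (m : ℕ∞) ∧ Q m} = ∅ := by
      ext j; simp only [Set.mem_setOf_eq, Set.mem_empty_iff_false, iff_false]
      rintro ⟨m, rfl, hQ⟩; exact h m hQ
    rw [this, sInf_empty]

lemma sInf_natSet_eq_coe_iff (Q : ℕ → Prop) (t : ℕ) :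
    sInf {j : ℕ∞ | ∃ m : ℕ, j = (m : ℕ∞) ∧ Q m} = (t : ℕ∞) ↔ Q t ∧ ∀ j < t, ¬ Q j := by
  classical
  have hle : ∀ (t' : ℕ), Q t' → (∀ j < t', ¬ Q j) →
      sInf {j : ℕ∞ | ∃ m : ℕ, j = (m : ℕ∞) ∧ Q m} = (t' : ℕ∞) := by
    intro t' hQ hmin
    refine le_antisymm (sInf_le ⟨t', rfl, hQ⟩) (le_sInf ?_)
    rintro b ⟨m, rfl, hm⟩
    exact_mod_cast not_lt.mp (fun h => hmin m h hm)
  constructor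
  · intro h
    have hne : ∃ m, Q m := by
      by_contra hc
      push_neg at hc
      rw [(sInf_natSet_eq_top_iff Q).mpr hc] at h
      exact (by simp : ((t : ℕ∞) ≠ ⊤)) h.symm
    have h2 := hle (Nat.find hne) (Nat.find_spec hne) (fun j hj => Nat.find_min hne hj)
    rw [h2] at h
    have : Nat.find hne = t := by exact_mod_cast h
    subst this
    exact ⟨Nat.find_spec hne, fun j hj => Nat.find_min hne hj⟩
  · rintro ⟨hQ, hmin⟩; exact hle t hQ hmin

lemma tend_aux {s : ℕ → ℝ} (h : Tendsto (fun n : ℕ => s n / n) atTop (𝓝 0)) {c : ℝ}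
    (hc : 0 < c) : Tendsto (fun n : ℕ => s n + c * n) atTop atTop := by
  have h1 : Tendsto (fun n : ℕ => s n / n + c) atTop (𝓝 c) := by
    simpa using h.add_const c
  have h3 : Tendsto (fun n : ℕ => (s n / n + c) * (n : ℝ)) atTop atTop :=
    Filter.Tendsto.pos_mul_atTop hc h1 tendsto_natCast_atTop_atTop
  refine h3.congr' ?_
  filter_upwards [eventually_ge_atTop 1] with n hn
  have hn0 : (n : ℝ) ≠ 0 := by positivity
  field_simp

lemma tendsto_shift' {u : ℕ → ℝ}
    (hu : Tendsto (fun n : ℕ => (∑ i ∈ range n, u i) / n) atTop (𝓝 0)) (m : ℕ) {c : ℝ}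
    (hc : 0 < c) :
    Tendsto (fun n : ℕ => (∑ j ∈ range n, u (m + j)) + c * n) atTop atTop := by
  set s : ℕ → ℝ := fun n => ∑ i ∈ range n, u i with hs
  have base : Tendsto (fun n : ℕ => s n + c * n) atTop atTop := tend_aux hu hc
  have comp : Tendsto (fun n : ℕ => s (n + m) + c * ((n : ℝ) + m)) atTop atTop := by
    have := base.comp (tendsto_add_atTop_nat m)
    refine this.congr (fun n => ?_)
    simp only [Function.comp]
    push_cast
    ring
  have comp2 : Tendsto (fun n : ℕ => s (n + m) + c * ((n : ℝ) + m) + (-(c * m) - s m))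
      atTop atTop := tendsto_atTop_add_const_right _ _ comp
  refine comp2.congr (fun n => ?_)
  have hsum : s (m + n) = s m + ∑ j ∈ range n, u (m + j) := Finset.sum_range_add u m n
  have h2 : s (n + m) = s m + ∑ j ∈ range n, u (m + j) := by rw [add_comm n m, hsum]
  rw [h2]
  ring

lemma not_tendsto_both {f : ℕ → ℝ} (h1 : Tendsto f atTop atTop)
    (h2 : Tendsto f atTop atBot) : False := by
  obtain ⟨n, hn1, hn2⟩ := ((h1.eventually_ge_atTop 1).and (h2.eventually_le_atBot 0)).exists
  linarith

lemma sum_prefix_eq (f : ℕ → ℝ) {n N : ℕ} (h : n ≤ N) :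
    ∑ j ∈ range n, f j = ∑ j : Fin N, if (j : ℕ) < n then f j else 0 := by
  rw [Fin.sum_univ_eq_sum_range (fun j => if j < n then f j else 0) N]
  rw [← Finset.sum_subset (Finset.range_subset_range.mpr h)
    (fun x _ hnx => if_neg (fun hlt => hnx (mem_range.mpr hlt)))]
  exact Finset.sum_congr rfl (fun x hx => (if_pos (mem_range.mp hx)).symm)

end helpers

lemma mapvec {Ω : Type*} [MeasurableSpace Ω] (P : Measure Ω) [IsProbabilityMeasure P]
    (ξ : ℕ → Ω → ℝ) (hmeas : ∀ i, Measurable (ξ i))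
    (hindep : iIndepFun ξ P)
    (hident : ∀ i, IdentDistrib (ξ i) (ξ 0) P P) (m N : ℕ) :
    Measure.map (fun ω (j : Fin N) => ξ (m + 1 + (j : ℕ)) ω) P =
      Measure.pi (fun _ : Fin N => Measure.map (ξ 0) P) := by
  classical
  haveI : IsProbabilityMeasure (Measure.map (ξ 0) P) :=
    Measure.isProbabilityMeasure_map (hmeas 0).aemeasurable
  have hvec : Measurable (fun ω (j : Fin N) => ξ (m + 1 + (j : ℕ)) ω) :=
    measurable_pi_lambda _ (fun j => hmeas _)
  refine (Measure.pi_eq fun s hs => ?_).symm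
  rw [Measure.map_apply hvec (MeasurableSet.univ_pi hs)]
  have hpre : (fun ω (j : Fin N) => ξ (m + 1 + (j : ℕ)) ω) ⁻¹' (Set.univ.pi s) =
      ⋂ j : Fin N, ξ (m + 1 + (j : ℕ)) ⁻¹' s j := by
    ext ω; simp [Set.mem_pi]
  rw [hpre]
  set e : Fin N → ℕ := fun j => m + 1 + (j : ℕ) with he
  have einj : Function.Injective e := by
    intro a b h
    have : (a : ℕ) = (b : ℕ) := by simpa [he] using h
    exact Fin.ext this
  set sets : ℕ → Set ℝ := fun i => ⋂ j : Fin N, ⋂ (_ : e j = i), s j with hsets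
  have hsets_meas : ∀ i, MeasurableSet (sets i) :=
    fun i => MeasurableSet.iInter fun j => MeasurableSet.iInter fun _ => hs j
  have hsets_e : ∀ j : Fin N, sets (e j) = s j := by
    intro j
    apply le_antisymm
    · exact Set.iInter_subset_of_subset j (by simp)
    · intro x hx
      simp only [hsets, Set.mem_iInter]
      intro j' hj'
      rw [einj hj']
      exact hx
  have hBig : (⋂ j : Fin N, ξ (m + 1 + (j : ℕ)) ⁻¹' s j) =
      ⋂ i ∈ Finset.image e Finset.univ, ξ i ⁻¹' sets i := by
    rw [Finset.set_biInter_finset_image]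
    simp only [Finset.mem_univ, Set.iInter_true]
    exact Set.iInter_congr fun j => by rw [hsets_e j]
  rw [hBig, hindep.measure_inter_preimage_eq_mul (Finset.image e Finset.univ)
    (fun i _ => hsets_meas i)]
  rw [Finset.prod_image (fun a _ b _ h => einj h)]
  refine Finset.prod_congr rfl fun j _ => ?_
  rw [hsets_e j, (hident (e j)).measure_mem_eq (hs j),
    Measure.map_apply (hmeas 0) (hs j)]

lemma shift_inv {Ω : Type*} [MeasurableSpace Ω] (P : Measure Ω) [IsProbabilityMeasure P]
    (ξ : ℕ → Ω → ℝ) (hmeas : ∀ i, Measurable (ξ i))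
    (hindep : iIndepFun ξ P)
    (hident : ∀ i, IdentDistrib (ξ i) (ξ 0) P P) (a c : ℝ) (m m' : ℕ) :
    P {ω | ∀ n : ℕ, 1 ≤ n → a ≤ (∑ j ∈ range n, ξ (m + 1 + j) ω) + c * n} =
      P {ω | ∀ n : ℕ, 1 ≤ n → a ≤ (∑ j ∈ range n, ξ (m' + 1 + j) ω) + c * n} := by
  classical
  set F : ℕ → ℕ → Set Ω := fun q N =>
    {ω | ∀ n : ℕ, 1 ≤ n → n ≤ N → a ≤ (∑ j ∈ range n, ξ (q + 1 + j) ω) + c * n} with hF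
  have hFmeas : ∀ q N, MeasurableSet (F q N) := by
    intro q N
    have : F q N = ⋂ (n : ℕ) (_ : 1 ≤ n) (_ : n ≤ N),
        {ω | a ≤ (∑ j ∈ range n, ξ (q + 1 + j) ω) + c * n} := by
      ext ω; simp [hF]
    rw [this]
    refine MeasurableSet.iInter fun n => MeasurableSet.iInter fun _ =>
      MeasurableSet.iInter fun _ => measurableSet_le measurable_const ?_
    exact (Finset.measurable_sum _ (fun j _ => hmeas _)).add measurable_const
  have hFanti : ∀ q, Antitone (F q) := by
    intro q N N' h ω hω n h1 h2
    exact hω n h1 (h2.trans h)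
  have hVF : ∀ q, {ω | ∀ n : ℕ, 1 ≤ n → a ≤ (∑ j ∈ range n, ξ (q + 1 + j) ω) + c * n}
      = ⋂ N, F q N := by
    intro q; ext ω
    simp only [Set.mem_setOf_eq, Set.mem_iInter, hF]
    exact ⟨fun h N n h1 _ => h n h1, fun h n h1 => h n n h1 le_rfl⟩
  have hkey : ∀ q N, P (F q N) =
      Measure.pi (fun _ : Fin N => Measure.map (ξ 0) P)
        {v : Fin N → ℝ | ∀ n : ℕ, 1 ≤ n → n ≤ N →
          a ≤ (∑ j : Fin N, if (j : ℕ) < n then v j else 0) + c * n} := by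
    intro q N
    have hsmeas : MeasurableSet {v : Fin N → ℝ | ∀ n : ℕ, 1 ≤ n → n ≤ N →
        a ≤ (∑ j : Fin N, if (j : ℕ) < n then v j else 0) + c * n} := by
      have : {v : Fin N → ℝ | ∀ n : ℕ, 1 ≤ n → n ≤ N →
          a ≤ (∑ j : Fin N, if (j : ℕ) < n then v j else 0) + c * n} =
          ⋂ (n : ℕ) (_ : 1 ≤ n) (_ : n ≤ N),
            {v : Fin N → ℝ | a ≤ (∑ j : Fin N, if (j : ℕ) < n then v j else 0) + c * n} := by
        ext v; simp
      rw [this]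
      refine MeasurableSet.iInter fun n => MeasurableSet.iInter fun _ =>
        MeasurableSet.iInter fun _ => measurableSet_le measurable_const ?_
      refine Measurable.add ?_ measurable_const
      refine Finset.measurable_sum _ fun j _ => ?_
      by_cases h : (j : ℕ) < n
      · simpa [h] using measurable_pi_apply j
      · simpa [h] using measurable_const
    rw [← mapvec P ξ hmeas hindep hident q N,
      Measure.map_apply (measurable_pi_lambda _ (fun j => hmeas _)) hsmeas]
    congr 1
    ext ω
    simp only [Set.mem_preimage, Set.mem_setOf_eq, hF]
    refine forall_congr' fun n => ?_
    refine imp_congr_right fun _ => imp_congr_right fun h2 => ?_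
    rw [sum_prefix_eq (fun j => ξ (q + 1 + j) ω) h2]
  have htend : ∀ q, Tendsto (fun N => P (F q N)) atTop
      (𝓝 (P {ω | ∀ n : ℕ, 1 ≤ n → a ≤ (∑ j ∈ range n, ξ (q + 1 + j) ω) + c * n})) := by
    intro q
    rw [hVF q]
    exact tendsto_measure_iInter_atTop (fun N => (hFmeas q N).nullMeasurableSet)
      (hFanti q) ⟨0, measure_ne_top _ _⟩
  have heq : ∀ N, P (F m N) = P (F m' N) := fun N => by rw [hkey m N, hkey m' N]
  exact tendsto_nhds_unique ((htend m).congr heq) (htend m')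
theorem stmt9 {Ω : Type*} [MeasurableSpace Ω] (P : Measure Ω) [IsProbabilityMeasure P]
    (ξ : ℕ → Ω → ℝ) (hmeas : ∀ i, Measurable (ξ i))
    (hindep : iIndepFun ξ P)
    (hident : ∀ i, IdentDistrib (ξ i) (ξ 0) P P)
    (hint : Integrable (ξ 0) P) (hmean : P[ξ 0] = 0)
    (cl cr : ℝ) (hcl : 0 < cl) (hcr : 0 < cr)
    (X : ℕ → Ω → ℝ) (hX0 : ∀ ω, X 0 ω = 0)
    (hXrec : ∀ n ω, X (n + 1) ω =
      if X n ω < 0 then X n ω + (ξ (n + 1) ω - cl) else X n ω + (ξ (n + 1) ω + cr))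
    -- τu k is the crossing time τ_{2k}^↑ ; τd (k+1) is the crossing time τ_{2k+1}^↓
    (τu τd : ℕ → Ω → ℕ∞)
    (hτu0 : ∀ ω, τu 0 ω = 0)
    (hτd : ∀ k ω, τd (k + 1) ω =
      sInf {j : ℕ∞ | ∃ m : ℕ, j = (m : ℕ∞) ∧ τu k ω < (m : ℕ∞) ∧ X m ω < 0})
    (hτu : ∀ k ω, τu (k + 1) ω =
      sInf {j : ℕ∞ | ∃ m : ℕ, j = (m : ℕ∞) ∧ τd (k + 1) ω < (m : ℕ∞) ∧ 0 ≤ X m ω})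
    :
    P {ω | Tendsto (fun n => X n ω) atTop atTop ∨
        Tendsto (fun n => X n ω) atTop atBot} = 1 ∧
    (P {ω | Tendsto (fun n => X n ω) atTop atTop}).toReal =
      ∑' k : ℕ, ((P {ω | τu k ω ≠ ⊤}).toReal - (P {ω | τd (k + 1) ω ≠ ⊤}).toReal) ∧
    (P {ω | Tendsto (fun n => X n ω) atTop atBot}).toReal =
      ∑' k : ℕ, ((P {ω | τd (k + 1) ω ≠ ⊤}).toReal - (P {ω | τu (k + 1) ω ≠ ⊤}).toReal) := by
  classical
  -- σ-algebras generated by initial and tail blocks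
  set 𝔪 : ℕ → MeasurableSpace Ω := fun m =>
    ⨆ i ∈ {i : ℕ | i ≤ m}, MeasurableSpace.comap (ξ i) inferInstance with h𝔪
  set 𝔫 : ℕ → MeasurableSpace Ω := fun m =>
    ⨆ i ∈ {i : ℕ | m < i}, MeasurableSpace.comap (ξ i) inferInstance with h𝔫
  have hmle : ∀ m, 𝔪 m ≤ ‹MeasurableSpace Ω› :=
    fun m => iSup₂_le fun i _ => measurable_iff_comap_le.mp (hmeas i)
  have hnle : ∀ m, 𝔫 m ≤ ‹MeasurableSpace Ω› :=
    fun m => iSup₂_le fun i _ => measurable_iff_comap_le.mp (hmeas i)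
  have hmono : ∀ {q q' : ℕ}, q ≤ q' → 𝔪 q ≤ 𝔪 q' := by
    intro q q' h
    simp only [h𝔪]
    exact iSup₂_le fun i hi => le_biSup (fun i => MeasurableSpace.comap (ξ i) inferInstance) (show i ∈ {i : ℕ | i ≤ q'} from le_trans hi h)
  have hξm : ∀ {i m : ℕ}, i ≤ m → Measurable[𝔪 m] (ξ i) := by
    intro i m h
    refine measurable_iff_comap_le.mpr ?_
    simp only [h𝔪]
    exact le_biSup (fun i => MeasurableSpace.comap (ξ i) inferInstance) (show i ∈ {i : ℕ | i ≤ m} from h)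
  have hξn : ∀ {i m : ℕ}, m < i → Measurable[𝔫 m] (ξ i) := by
    intro i m h
    refine measurable_iff_comap_le.mpr ?_
    simp only [h𝔫]
    exact le_biSup (fun i => MeasurableSpace.comap (ξ i) inferInstance) (show i ∈ {i : ℕ | m < i} from h)
  have hXm : ∀ (m j : ℕ), j ≤ m → Measurable[𝔪 m] (X j) := by
    intro m j
    induction j with
    | zero =>
      intro _
      have : X 0 = fun _ => (0 : ℝ) := funext hX0
      rw [this]; exact measurable_const
    | succ j IH =>
      intro hj
      have hXj := IH (le_trans (Nat.le_succ j) hj)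
      have : X (j + 1) = fun ω => if X j ω < 0 then X j ω + (ξ (j + 1) ω - cl)
          else X j ω + (ξ (j + 1) ω + cr) := funext (hXrec j)
      rw [this]
      exact Measurable.ite (measurableSet_lt hXj measurable_const)
        (hXj.add ((hξm hj).sub measurable_const))
        (hXj.add ((hξm hj).add measurable_const))
  -- characterizations of crossing times
  have Hd_top : ∀ k ω, τd (k + 1) ω = ⊤ ↔ ∀ m : ℕ, ¬(τu k ω < (m : ℕ∞) ∧ X m ω < 0) :=
    fun k ω => by rw [hτd]; exact sInf_natSet_eq_top_iff _
  have Hu_top : ∀ k ω, τu (k + 1) ω = ⊤ ↔ ∀ m : ℕ, ¬(τd (k + 1) ω < (m : ℕ∞) ∧ 0 ≤ X m ω) :=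
    fun k ω => by rw [hτu]; exact sInf_natSet_eq_top_iff _
  have Hd_coe : ∀ k ω (t : ℕ), τd (k + 1) ω = (t : ℕ∞) ↔
      (τu k ω < (t : ℕ∞) ∧ X t ω < 0) ∧ ∀ j < t, ¬(τu k ω < (j : ℕ∞) ∧ X j ω < 0) :=
    fun k ω t => by rw [hτd]; exact sInf_natSet_eq_coe_iff _ t
  have Hu_coe : ∀ k ω (t : ℕ), τu (k + 1) ω = (t : ℕ∞) ↔
      (τd (k + 1) ω < (t : ℕ∞) ∧ 0 ≤ X t ω) ∧
        ∀ j < t, ¬(τd (k + 1) ω < (j : ℕ∞) ∧ 0 ≤ X j ω) :=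
    fun k ω t => by rw [hτu]; exact sInf_natSet_eq_coe_iff _ t
  have T1 : ∀ k ω, τu k ω = ⊤ → τd (k + 1) ω = ⊤ := by
    intro k ω h
    rw [Hd_top]
    rintro m ⟨hlt, -⟩
    rw [h] at hlt
    exact not_top_lt hlt
  have T2 : ∀ k ω, τd (k + 1) ω = ⊤ → τu (k + 1) ω = ⊤ := by
    intro k ω h
    rw [Hu_top]
    rintro m ⟨hlt, -⟩
    rw [h] at hlt
    exact not_top_lt hlt
  have T5 : ∀ k ω (t : ℕ), τu k ω = (t : ℕ∞) → 0 ≤ X t ω := by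
    intro k ω t h
    cases k with
    | zero =>
      have h0 := hτu0 ω
      rw [h0] at h
      have : t = 0 := by exact_mod_cast h.symm
      rw [this, hX0 ω]
    | succ k => exact ((Hu_coe k ω t).mp h).1.2
  have T3 : ∀ k ω (t : ℕ), τd (k + 1) ω = (t : ℕ∞) → X t ω < 0 :=
    fun k ω t h => ((Hd_coe k ω t).mp h).1.2
  have T6 : ∀ k ω, τd (k + 1) ω = ⊤ → ∀ m : ℕ, τu k ω < (m : ℕ∞) → 0 ≤ X m ω := by
    intro k ω h m hlt
    by_contra hneg
    exact (Hd_top k ω).mp h m ⟨hlt, lt_of_not_ge hneg⟩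
  have T7 : ∀ k ω, τu (k + 1) ω = ⊤ → ∀ m : ℕ, τd (k + 1) ω < (m : ℕ∞) → X m ω < 0 := by
    intro k ω h m hlt
    by_contra hneg
    exact (Hu_top k ω).mp h m ⟨hlt, le_of_not_gt hneg⟩
  -- full characterization with finite predecessor
  have Hd_iff : ∀ k ω (t : ℕ), τd (k + 1) ω = (t : ℕ∞) ↔
      ∃ s : ℕ, s < t ∧ τu k ω = (s : ℕ∞) ∧ X t ω < 0 ∧
        ∀ j : ℕ, s < j → j < t → 0 ≤ X j ω := by
    intro k ω t
    rw [Hd_coe]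
    constructor
    · rintro ⟨⟨hlt, hXt⟩, hmin⟩
      obtain ⟨s, hs, hst⟩ := (enat_lt_coe_iff _ t).mp hlt
      refine ⟨s, hst, hs, hXt, fun j hsj hjt => ?_⟩
      by_contra hneg
      exact hmin j hjt ⟨by rw [hs]; exact_mod_cast hsj, lt_of_not_ge hneg⟩
    · rintro ⟨s, hst, hs, hXt, hall⟩
      refine ⟨⟨by rw [hs]; exact_mod_cast hst, hXt⟩, fun j hjt => ?_⟩
      rintro ⟨hlt, hXj⟩
      rw [hs] at hlt
      have hsj : s < j := by exact_mod_cast hlt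
      exact absurd hXj (not_lt.mpr (hall j hsj hjt))
  have Hu_iff : ∀ k ω (t : ℕ), τu (k + 1) ω = (t : ℕ∞) ↔
      ∃ s : ℕ, s < t ∧ τd (k + 1) ω = (s : ℕ∞) ∧ 0 ≤ X t ω ∧
        ∀ j : ℕ, s < j → j < t → X j ω < 0 := by
    intro k ω t
    rw [Hu_coe]
    constructor
    · rintro ⟨⟨hlt, hXt⟩, hmin⟩
      obtain ⟨s, hs, hst⟩ := (enat_lt_coe_iff _ t).mp hlt
      refine ⟨s, hst, hs, hXt, fun j hsj hjt => ?_⟩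
      by_contra hneg
      exact hmin j hjt ⟨by rw [hs]; exact_mod_cast hsj, le_of_not_gt hneg⟩
    · rintro ⟨s, hst, hs, hXt, hall⟩
      refine ⟨⟨by rw [hs]; exact_mod_cast hst, hXt⟩, fun j hjt => ?_⟩
      rintro ⟨hlt, hXj⟩
      rw [hs] at hlt
      have hsj : s < j := by exact_mod_cast hlt
      exact absurd (hall j hsj hjt) (not_lt.mpr hXj)
  -- measurability of level sets of the crossing times
  have stepD : ∀ k : ℕ, (∀ m : ℕ, MeasurableSet[𝔪 m] {ω | τu k ω = (m : ℕ∞)}) →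
      ∀ t : ℕ, MeasurableSet[𝔪 t] {ω | τd (k + 1) ω = (t : ℕ∞)} := by
    intro k hk t
    have hset : {ω | τd (k + 1) ω = (t : ℕ∞)} =
        ⋃ (s : ℕ) (_ : s < t), ({ω | τu k ω = (s : ℕ∞)} ∩
          ({ω | X t ω < 0} ∩ ⋂ (j : ℕ) (_ : s < j) (_ : j < t), {ω | 0 ≤ X j ω})) := by
      ext ω
      simp only [Set.mem_setOf_eq, Set.mem_iUnion, Set.mem_inter_iff, Set.mem_iInter]
      rw [Hd_iff]
      constructor
      · rintro ⟨s, h1, h2, h3, h4⟩; exact ⟨s, h1, h2, h3, h4⟩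
      · rintro ⟨s, h1, h2, h3, h4⟩; exact ⟨s, h1, h2, h3, h4⟩
    rw [hset]
    refine MeasurableSet.iUnion fun s => MeasurableSet.iUnion fun hs => ?_
    refine MeasurableSet.inter (hmono hs.le _ (hk s)) (MeasurableSet.inter ?_ ?_)
    · exact measurableSet_lt (hXm t t le_rfl) measurable_const
    · exact MeasurableSet.iInter fun j => MeasurableSet.iInter fun _ =>
        MeasurableSet.iInter fun hjt => measurableSet_le measurable_const (hXm t j hjt.le)
  have stepU : ∀ k : ℕ, (∀ m : ℕ, MeasurableSet[𝔪 m] {ω | τd (k + 1) ω = (m : ℕ∞)}) →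
      ∀ t : ℕ, MeasurableSet[𝔪 t] {ω | τu (k + 1) ω = (t : ℕ∞)} := by
    intro k hk t
    have hset : {ω | τu (k + 1) ω = (t : ℕ∞)} =
        ⋃ (s : ℕ) (_ : s < t), ({ω | τd (k + 1) ω = (s : ℕ∞)} ∩
          ({ω | 0 ≤ X t ω} ∩ ⋂ (j : ℕ) (_ : s < j) (_ : j < t), {ω | X j ω < 0})) := by
      ext ω
      simp only [Set.mem_setOf_eq, Set.mem_iUnion, Set.mem_inter_iff, Set.mem_iInter]
      rw [Hu_iff]
      constructor
      · rintro ⟨s, h1, h2, h3, h4⟩; exact ⟨s, h1, h2, h3, h4⟩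
      · rintro ⟨s, h1, h2, h3, h4⟩; exact ⟨s, h1, h2, h3, h4⟩
    rw [hset]
    refine MeasurableSet.iUnion fun s => MeasurableSet.iUnion fun hs => ?_
    refine MeasurableSet.inter (hmono hs.le _ (hk s)) (MeasurableSet.inter ?_ ?_)
    · exact measurableSet_le measurable_const (hXm t t le_rfl)
    · exact MeasurableSet.iInter fun j => MeasurableSet.iInter fun _ =>
        MeasurableSet.iInter fun hjt => measurableSet_lt (hXm t j hjt.le) measurable_const
  have measU0 : ∀ m : ℕ, MeasurableSet[𝔪 m] {ω | τu 0 ω = (m : ℕ∞)} := by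
    intro m
    cases m with
    | zero =>
      have : {ω | τu 0 ω = ((0 : ℕ) : ℕ∞)} = Set.univ := by
        ext ω; simpa using hτu0 ω
      rw [this]; exact @MeasurableSet.univ _ (𝔪 _)
    | succ m =>
      have : {ω | τu 0 ω = ((m + 1 : ℕ) : ℕ∞)} = ∅ := by
        ext ω
        simp only [Set.mem_setOf_eq, Set.mem_empty_iff_false, iff_false]
        rw [hτu0 ω]
        intro h
        have : (0 : ℕ) = m + 1 := by exact_mod_cast h
        omega
      rw [this]; exact @MeasurableSet.empty _ (𝔪 _)
  have measRec : ∀ k : ℕ, (∀ m : ℕ, MeasurableSet[𝔪 m] {ω | τu k ω = (m : ℕ∞)}) ∧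
      (∀ m : ℕ, MeasurableSet[𝔪 m] {ω | τd (k + 1) ω = (m : ℕ∞)}) := by
    intro k
    induction k with
    | zero => exact ⟨measU0, stepD 0 measU0⟩
    | succ k IH => exact ⟨stepU k IH.2, stepD (k + 1) (stepU k IH.2)⟩
  -- the basic events
  set B : ℕ → ℕ → Set Ω := fun k m => {ω | τu k ω = (m : ℕ∞)} with hB
  set Su : ℕ → Set Ω := fun k => {ω | τu k ω ≠ ⊤} with hSu
  set Sd : ℕ → Set Ω := fun k => {ω | τd (k + 1) ω ≠ ⊤} with hSd
  have measB : ∀ k m, MeasurableSet[𝔪 m] (B k m) := fun k m => (measRec k).1 m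
  have measBa : ∀ k m, MeasurableSet (B k m) := fun k m => hmle m _ (measB k m)
  have hSuU : ∀ k, Su k = ⋃ m : ℕ, B k m := by
    intro k
    ext ω
    simp only [hSu, hB, Set.mem_setOf_eq, Set.mem_iUnion]
    constructor
    · intro h
      obtain ⟨m, hm⟩ := WithTop.ne_top_iff_exists.mp h
      exact ⟨m, hm.symm⟩
    · rintro ⟨m, hm⟩
      rw [hm]; simp
  have measSu : ∀ k, MeasurableSet (Su k) := by
    intro k; rw [hSuU]; exact MeasurableSet.iUnion fun m => measBa k m
  have measSd : ∀ k, MeasurableSet (Sd k) := by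
    intro k
    have : Sd k = ⋃ m : ℕ, {ω | τd (k + 1) ω = (m : ℕ∞)} := by
      ext ω
      simp only [hSd, Set.mem_setOf_eq, Set.mem_iUnion]
      constructor
      · intro h
        obtain ⟨m, hm⟩ := WithTop.ne_top_iff_exists.mp h
        exact ⟨m, hm.symm⟩
      · rintro ⟨m, hm⟩
        rw [hm]; simp
    rw [this]
    exact MeasurableSet.iUnion fun m => hmle m _ ((measRec k).2 m)
  have Bdisj : ∀ k, Pairwise (Function.onFun Disjoint (B k)) := by
    intro k m m' hmm'
    refine Set.disjoint_left.mpr fun ω h1 h2 => ?_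
    simp only [hB, Set.mem_setOf_eq] at h1 h2
    rw [h1] at h2
    exact hmm' (by exact_mod_cast h2)
  have hSdSu : ∀ k, Sd k ⊆ Su k := by
    intro k ω hω
    simp only [hSu, Set.mem_setOf_eq]
    simp only [hSd, Set.mem_setOf_eq] at hω
    intro h
    exact hω (T1 k ω h)
  have hSuSd : ∀ k, Su (k + 1) ⊆ Sd k := by
    intro k ω hω
    simp only [hSd, Set.mem_setOf_eq]
    simp only [hSu, Set.mem_setOf_eq] at hω
    intro h
    exact hω (T2 k ω h)
  have SuAnti : ∀ {k k' : ℕ}, k ≤ k' → Su k' ⊆ Su k := by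
    intro k k' h
    induction h with
    | refl => exact subset_rfl
    | step h IH =>
      intro ω hω
      exact IH (hSdSu _ (hSuSd _ hω))
  have hchain : ∀ {k k' : ℕ}, k < k' → Su k' ⊆ Sd k := by
    intro k k' h
    intro ω hω
    exact hSuSd k (SuAnti h hω)
  -- dynamics of the walk
  have formUp : ∀ (ω : Ω) (m n : ℕ), (∀ i, i < n → 0 ≤ X (m + i) ω) →
      X (m + n) ω = X m ω + (∑ j ∈ range n, ξ (m + 1 + j) ω) + cr * n := by
    intro ω m n
    induction n with
    | zero => intro _; simp
    | succ n IH =>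
      intro h
      have hXn : 0 ≤ X (m + n) ω := h n (Nat.lt_succ_self n)
      have hrec := hXrec (m + n) ω
      rw [if_neg (not_lt.mpr hXn)] at hrec
      have hstep : X (m + (n + 1)) ω = X (m + n) ω + (ξ (m + n + 1) ω + cr) := by
        rw [show m + (n + 1) = m + n + 1 by omega]; exact hrec
      rw [hstep, IH (fun i hi => h i (hi.trans (Nat.lt_succ_self n))),
        Finset.sum_range_succ, show m + 1 + n = m + n + 1 by omega]
      push_cast
      ring
  have formDn : ∀ (ω : Ω) (m n : ℕ), (∀ i, i < n → X (m + i) ω < 0) →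
      X (m + n) ω = X m ω + (∑ j ∈ range n, ξ (m + 1 + j) ω) - cl * n := by
    intro ω m n
    induction n with
    | zero => intro _; simp
    | succ n IH =>
      intro h
      have hXn : X (m + n) ω < 0 := h n (Nat.lt_succ_self n)
      have hrec := hXrec (m + n) ω
      rw [if_pos hXn] at hrec
      have hstep : X (m + (n + 1)) ω = X (m + n) ω + (ξ (m + n + 1) ω - cl) := by
        rw [show m + (n + 1) = m + n + 1 by omega]; exact hrec
      rw [hstep, IH (fun i hi => h i (hi.trans (Nat.lt_succ_self n))),
        Finset.sum_range_succ, show m + 1 + n = m + n + 1 by omega]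
      push_cast
      ring
  have stayUp : ∀ (ω : Ω) (m : ℕ), 0 ≤ X m ω →
      (∀ n : ℕ, 1 ≤ n → 0 ≤ (∑ j ∈ range n, ξ (m + 1 + j) ω) + cr * n) →
      ∀ n, 0 ≤ X (m + n) ω := by
    intro ω m h0 hW n
    induction n using Nat.strong_induction_on with
    | _ n IH =>
      match n with
      | 0 => exact h0
      | (n' + 1) =>
        have hform := formUp ω m (n' + 1) (fun i hi => IH i hi)
        rw [hform]
        have := hW (n' + 1) (Nat.le_add_left 1 n')
        have harr : X m ω + (∑ j ∈ range (n' + 1), ξ (m + 1 + j) ω) + cr * ((n' + 1 : ℕ) : ℝ)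
            = X m ω + ((∑ j ∈ range (n' + 1), ξ (m + 1 + j) ω) + cr * ((n' + 1 : ℕ) : ℝ)) := by
          ring
        rw [harr]
        exact add_nonneg h0 this
  -- strong law of large numbers
  set G0 : Set Ω := {ω | Tendsto (fun n : ℕ => (∑ i ∈ range n, ξ i ω) / n) atTop (𝓝 0)}
    with hG0def
  have hG0 : P G0ᶜ = 0 := by
    have hae := strong_law_ae_real ξ hint (fun i j hij => hindep.indepFun hij) hident
    rw [hmean] at hae
    rw [ae_iff] at hae
    exact hae
  -- convergence to +∞ on upward final events
  have convUp : ∀ (k : ℕ) (ω : Ω), ω ∈ G0 → ω ∈ Su k → ω ∉ Sd k →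
      Tendsto (fun n => X n ω) atTop atTop := by
    intro k ω hG hSu' hSd'
    simp only [hSu, Set.mem_setOf_eq] at hSu'
    obtain ⟨t, ht⟩ := WithTop.ne_top_iff_exists.mp hSu'
    have ht : τu k ω = (t : ℕ∞) := ht.symm
    have hdtop : τd (k + 1) ω = ⊤ := by
      simp only [hSd, Set.mem_setOf_eq, not_not] at hSd'
      exact hSd'
    have hnn : ∀ i : ℕ, 0 ≤ X (t + i) ω := by
      intro i
      cases i with
      | zero => exact T5 k ω t ht
      | succ i =>
        refine T6 k ω hdtop (t + (i + 1)) ?_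
        rw [ht]
        exact_mod_cast Nat.lt_add_of_pos_right (Nat.succ_pos i)
    have hform : ∀ n, X (t + n) ω = X t ω + ((∑ j ∈ range n, ξ (t + 1 + j) ω) + cr * n) := by
      intro n
      rw [formUp ω t n (fun i _ => hnn i)]
      ring
    have hbase : Tendsto (fun n : ℕ => (∑ j ∈ range n, ξ (t + 1 + j) ω) + cr * n)
        atTop atTop := by
      have := tendsto_shift' (u := fun i => ξ i ω) hG (t + 1) hcr
      exact this
    have h1 : Tendsto (fun n : ℕ => X (t + n) ω) atTop atTop := by
      have h2 := tendsto_atTop_add_const_left _ (X t ω) hbase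
      refine h2.congr fun n => (hform n).symm
    have h3 : Tendsto (fun n : ℕ => X (t + (n - t)) ω) atTop atTop :=
      h1.comp (tendsto_sub_atTop_nat t)
    refine h3.congr' ?_
    filter_upwards [eventually_ge_atTop t] with n hn
    rw [show t + (n - t) = n by omega]
  have convDn : ∀ (k : ℕ) (ω : Ω), ω ∈ G0 → ω ∈ Sd k → ω ∉ Su (k + 1) →
      Tendsto (fun n => X n ω) atTop atBot := by
    intro k ω hG hSd' hSu'
    simp only [hSd, Set.mem_setOf_eq] at hSd'
    obtain ⟨t, ht⟩ := WithTop.ne_top_iff_exists.mp hSd'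
    have ht : τd (k + 1) ω = (t : ℕ∞) := ht.symm
    have hutop : τu (k + 1) ω = ⊤ := by
      simp only [hSu, Set.mem_setOf_eq, not_not] at hSu'
      exact hSu'
    have hnn : ∀ i : ℕ, X (t + i) ω < 0 := by
      intro i
      cases i with
      | zero => exact T3 k ω t ht
      | succ i =>
        refine T7 k ω hutop (t + (i + 1)) ?_
        rw [ht]
        exact_mod_cast Nat.lt_add_of_pos_right (Nat.succ_pos i)
    have hform : ∀ n, -X (t + n) ω =
        -X t ω + ((∑ j ∈ range n, -ξ (t + 1 + j) ω) + cl * n) := by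
      intro n
      rw [formDn ω t n (fun i _ => hnn i), Finset.sum_neg_distrib]
      ring
    have hGneg : Tendsto (fun n : ℕ => (∑ i ∈ range n, -ξ i ω) / n) atTop (𝓝 0) := by
      have : Tendsto (fun n : ℕ => -((∑ i ∈ range n, ξ i ω) / n)) atTop (𝓝 (-0)) := hG.neg
      rw [neg_zero] at this
      refine this.congr fun n => ?_
      rw [Finset.sum_neg_distrib, neg_div]
    have hbase : Tendsto (fun n : ℕ => (∑ j ∈ range n, -ξ (t + 1 + j) ω) + cl * n)
        atTop atTop := tendsto_shift' (u := fun i => -ξ i ω) hGneg (t + 1) hcl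
    have h1 : Tendsto (fun n : ℕ => -X (t + n) ω) atTop atTop := by
      have h2 := tendsto_atTop_add_const_left _ (-X t ω) hbase
      refine h2.congr fun n => (hform n).symm
    have h3 : Tendsto (fun n : ℕ => -X (t + (n - t)) ω) atTop atTop :=
      h1.comp (tendsto_sub_atTop_nat t)
    have h4 : Tendsto (fun n : ℕ => -X n ω) atTop atTop := by
      refine h3.congr' ?_
      filter_upwards [eventually_ge_atTop t] with n hn
      rw [show t + (n - t) = n by omega]
    exact tendsto_neg_atTop_iff.mp h4
  -- the event that all crossing times are finite
  set T : Set Ω := ⋂ k, Su k with hT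
  have cover : ∀ ω : Ω, ω ∉ T → ∃ k, (ω ∈ Su k ∧ ω ∉ Sd k) ∨ (ω ∈ Sd k ∧ ω ∉ Su (k + 1)) := by
    intro ω hω
    have hex : ∃ k, ω ∉ Su k := by
      by_contra hc
      push_neg at hc
      exact hω (Set.mem_iInter.mpr hc)
    have h0 : ω ∈ Su 0 := by
      simp only [hSu, Set.mem_setOf_eq]
      rw [hτu0 ω]
      simp
    have hk0' : Nat.find hex ≠ 0 := by
      intro h
      have := Nat.find_spec hex
      rw [h] at this
      exact this h0
    obtain ⟨k, hk⟩ : ∃ k, Nat.find hex = k + 1 := ⟨Nat.find hex - 1, by omega⟩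
    have hSuk : ω ∈ Su k := by
      by_contra hc
      have : Nat.find hex ≤ k := Nat.find_le hc
      omega
    have hnotSuk1 : ω ∉ Su (k + 1) := by
      rw [← hk]; exact Nat.find_spec hex
    by_cases hd : ω ∈ Sd k
    · exact ⟨k, Or.inr ⟨hd, hnotSuk1⟩⟩
    · exact ⟨k, Or.inl ⟨hSuk, hd⟩⟩
  -- "stay above a forever" events for the shifted walks
  set V : ℕ → ℝ → Set Ω := fun q aa =>
    {ω | ∀ n : ℕ, 1 ≤ n → aa ≤ (∑ j ∈ range n, ξ (q + 1 + j) ω) + cr * n} with hV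
  have measVn : ∀ q aa, MeasurableSet[𝔫 q] (V q aa) := by
    intro q aa
    have : V q aa = ⋂ (n : ℕ) (_ : 1 ≤ n),
        {ω | aa ≤ (∑ j ∈ range n, ξ (q + 1 + j) ω) + cr * n} := by
      ext ω; simp [hV]
    rw [this]
    refine MeasurableSet.iInter fun n => MeasurableSet.iInter fun _ =>
      measurableSet_le measurable_const ?_
    exact (Finset.measurable_sum _ (fun j _ => hξn (by omega))).add measurable_const
  have measVa : ∀ q aa, MeasurableSet (V q aa) := fun q aa => hnle q _ (measVn q aa)
  have hshift : ∀ q aa, P (V q aa) = P (V 0 aa) := by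
    intro q aa
    simp only [hV]
    exact shift_inv P ξ hmeas hindep hident aa cr q 0
  -- independence of initial and tail blocks
  have hblocks : ∀ q : ℕ, Indep (𝔪 q) (𝔫 q) P := by
    intro q
    simp only [h𝔪, h𝔫]
    refine indep_iSup_of_disjoint (fun i => measurable_iff_comap_le.mp (hmeas i))
      hindep.iIndep ?_
    rw [Set.disjoint_left]
    intro i h1 h2
    simp only [Set.mem_setOf_eq] at h1 h2
    omega
  -- a.s. the shifted walk is bounded below
  have hG0A : G0 ⊆ ⋃ K : ℕ, V 0 (-(K : ℝ)) := by
    intro ω hω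
    set W : ℕ → ℝ := fun n => (∑ j ∈ range n, ξ (0 + 1 + j) ω) + cr * n with hW
    have hbase : Tendsto W atTop atTop := by
      have h1 := tendsto_shift' (u := fun i => ξ i ω) hω 1 hcr
      refine h1.congr fun n => ?_
      simp [hW]
    obtain ⟨N, hN⟩ := eventually_atTop.mp (hbase.eventually_ge_atTop 0)
    obtain ⟨K, hK⟩ := exists_nat_ge (∑ n ∈ range N, |W n|)
    refine Set.mem_iUnion.mpr ⟨K, ?_⟩
    intro n h1
    show -(K : ℝ) ≤ W n
    by_cases hn : N ≤ n
    · have : (0 : ℝ) ≤ W n := hN n hn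
      have hK0 : (0 : ℝ) ≤ K := Nat.cast_nonneg K
      linarith
    · push_neg at hn
      have h2 : |W n| ≤ ∑ i ∈ range N, |W i| :=
        Finset.single_le_sum (fun i _ => abs_nonneg (W i)) (mem_range.mpr hn)
      have h3 : -|W n| ≤ W n := neg_abs_le (W n)
      linarith
  have hAU : P (⋃ K : ℕ, V 0 (-(K : ℝ))) = 1 := by
    have h1 : P ((⋃ K : ℕ, V 0 (-(K : ℝ)))ᶜ) = 0 :=
      measure_mono_null (Set.compl_subset_compl.mpr hG0A) hG0
    have h2 := measure_add_measure_compl (μ := P)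
      (MeasurableSet.iUnion fun K : ℕ => measVa 0 (-(K : ℝ)))
    rw [h1, add_zero, measure_univ] at h2
    exact h2
  have hhalf : ∃ K : ℕ, 1/2 ≤ P (V 0 (-(K : ℝ))) := by
    by_contra hc
    push_neg at hc
    have hdir : Directed (· ⊆ ·) (fun K : ℕ => V 0 (-(K : ℝ))) := by
      refine Monotone.directed_le ?_
      intro K K' hKK ω hω n h1
      have := hω n h1
      have hKK' : -(K' : ℝ) ≤ -(K : ℝ) := by
        simp only [neg_le_neg_iff]
        exact_mod_cast hKK
      linarith
    rw [Directed.measure_iUnion hdir] at hAU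
    have h9 : (⨆ K : ℕ, P (V 0 (-(K : ℝ)))) ≤ 1/2 := iSup_le fun K => (hc K).le
    rw [hAU] at h9
    norm_num at h9
  obtain ⟨K, hKhalf⟩ := hhalf
  -- positive probability of one large step
  have hstep_pos : ∃ η : ℝ, 0 < η ∧ P {ω | η ≤ ξ 0 ω + cr} ≠ 0 := by
    have hpos : P {ω | 0 < ξ 0 ω + cr} ≠ 0 := by
      intro h0
      have hae : ∀ᵐ ω ∂P, ξ 0 ω + cr ≤ 0 := by
        rw [ae_iff]
        convert h0 using 2
        ext ω; simp
      have hint2 : ∫ ω, (ξ 0 ω + cr) ∂P ≤ 0 := integral_nonpos_of_ae hae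
      rw [integral_add hint (integrable_const cr), hmean, integral_const, probReal_univ] at hint2
      simp at hint2
      linarith
    have hun : {ω | 0 < ξ 0 ω + cr} = ⋃ n : ℕ, {ω | 1/((n : ℝ) + 1) ≤ ξ 0 ω + cr} := by
      ext ω
      simp only [Set.mem_setOf_eq, Set.mem_iUnion]
      constructor
      · intro h
        obtain ⟨n, hn⟩ := exists_nat_one_div_lt h
        exact ⟨n, hn.le⟩
      · rintro ⟨n, hn⟩
        have : (0 : ℝ) < 1/((n : ℝ) + 1) := by positivity
        linarith
    by_contra hc
    push_neg at hc
    apply hpos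
    rw [hun]
    refine measure_iUnion_null fun n => ?_
    exact hc (1/((n : ℝ) + 1)) (by positivity)
  obtain ⟨η, hη, hp⟩ := hstep_pos
  set u : Set ℝ := {x | η ≤ x + cr} with hu
  have humeas : MeasurableSet u := measurableSet_le measurable_const
    (measurable_id.add_const cr)
  set p : ℝ≥0∞ := P (ξ 0 ⁻¹' u) with hpdef
  have hpne : p ≠ 0 := hp
  obtain ⟨m0, hm0⟩ := exists_nat_ge ((K : ℝ)/η)
  have hm0K : (K : ℝ) ≤ m0 * η := by
    rw [div_le_iff₀ hη] at hm0
    linarith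
  set Fm : Set Ω := ⋂ i ∈ Finset.image (fun j : ℕ => j + 1) (range m0), ξ i ⁻¹' u with hFm
  have hFmm : MeasurableSet[𝔪 m0] Fm := by
    refine Finset.measurableSet_biInter _ fun i hi => ?_
    simp only [Finset.mem_image, mem_range] at hi
    obtain ⟨j, hj, rfl⟩ := hi
    exact (hξm (by omega)) humeas
  have hPF : P Fm = p ^ m0 := by
    rw [hFm, hindep.measure_inter_preimage_eq_mul _ (sets := fun _ => u) (fun i _ => humeas)]
    rw [Finset.prod_congr rfl (fun i _ => ((hident i).measure_mem_eq humeas :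
      P (ξ i ⁻¹' u) = P (ξ 0 ⁻¹' u)))]
    rw [Finset.prod_const, Finset.card_image_of_injective _ (fun a b hab => by omega),
      Finset.card_range]
  have hPE : P (Fm ∩ V m0 (-(K : ℝ))) = P Fm * P (V m0 (-(K : ℝ))) :=
    ((hblocks m0).indepSet_of_measurableSet hFmm (measVn m0 _)).measure_inter_eq_mul
  have hclimb : ∀ ω : Ω, (∀ j < m0, η ≤ ξ (j + 1) ω + cr) → ∀ nn : ℕ, nn ≤ m0 →
      (nn : ℝ) * η ≤ (∑ j ∈ range nn, ξ (0 + 1 + j) ω) + cr * nn := by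
    intro ω hstep nn hnn
    have h1 : (∑ j ∈ range nn, ξ (0 + 1 + j) ω) + cr * nn
        = ∑ j ∈ range nn, (ξ (j + 1) ω + cr) := by
      rw [Finset.sum_add_distrib, Finset.sum_const, card_range, nsmul_eq_mul]
      congr 1
      · exact Finset.sum_congr rfl fun j _ => by rw [show 0 + 1 + j = j + 1 by omega]
      · ring
    rw [h1]
    have h2 : ∑ j ∈ range nn, η ≤ ∑ j ∈ range nn, (ξ (j + 1) ω + cr) :=
      Finset.sum_le_sum fun j hj => hstep j (lt_of_lt_of_le (mem_range.mp hj) hnn)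
    rw [Finset.sum_const, card_range, nsmul_eq_mul] at h2
    exact h2
  have hsubE : Fm ∩ V m0 (-(K : ℝ)) ⊆ V 0 0 := by
    rintro ω ⟨hF, hV'⟩
    have hstep : ∀ j < m0, η ≤ ξ (j + 1) ω + cr := by
      intro j hj
      have := Set.mem_iInter₂.mp hF (j + 1)
        (Finset.mem_image.mpr ⟨j, mem_range.mpr hj, rfl⟩)
      simpa [hu] using this
    intro n h1
    show (0 : ℝ) ≤ (∑ j ∈ range n, ξ (0 + 1 + j) ω) + cr * n
    by_cases hn : n ≤ m0
    · have := hclimb ω hstep n hn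
      have hn0 : (0 : ℝ) ≤ (n : ℝ) * η := by positivity
      linarith
    · push_neg at hn
      set n' := n - m0 with hn'
      have hsplit : ∑ j ∈ range n, ξ (0 + 1 + j) ω
          = (∑ j ∈ range m0, ξ (0 + 1 + j) ω) + ∑ j ∈ range n', ξ (m0 + 1 + j) ω := by
        rw [show n = m0 + n' by omega, Finset.sum_range_add]
        congr 1
        exact Finset.sum_congr rfl fun j _ => by rw [show 0 + 1 + (m0 + j) = m0 + 1 + j by omega]
      have hb1 : (m0 : ℝ) * η ≤ (∑ j ∈ range m0, ξ (0 + 1 + j) ω) + cr * m0 :=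
        hclimb ω hstep m0 le_rfl
      have hb2 : -(K : ℝ) ≤ (∑ j ∈ range n', ξ (m0 + 1 + j) ω) + cr * n' :=
        hV' n' (by omega)
      have hcast : (n : ℝ) = (m0 : ℝ) + (n' : ℝ) := by
        rw [hn']
        push_cast [Nat.cast_sub hn.le]
        ring
      rw [hsplit, hcast]
      have : cr * ((m0 : ℝ) + (n' : ℝ)) = cr * m0 + cr * n' := by ring
      rw [this]
      linarith
  set ε : ℝ≥0∞ := P (V 0 0) with hε
  have hεpos : 0 < ε := by
    have h2 : P (Fm ∩ V m0 (-(K : ℝ))) = p ^ m0 * P (V 0 (-(K : ℝ))) := by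
      rw [hPE, hPF, hshift m0]
    have h3 : (0 : ℝ≥0∞) < p ^ m0 * P (V 0 (-(K : ℝ))) := by
      refine ENNReal.mul_pos (pow_ne_zero m0 hpne) ?_
      intro h
      rw [h] at hKhalf
      simp at hKhalf
    calc (0 : ℝ≥0∞) < p ^ m0 * P (V 0 (-(K : ℝ))) := h3
    _ = P (Fm ∩ V m0 (-(K : ℝ))) := h2.symm
    _ ≤ ε := measure_mono hsubE
  -- the Markov-type contraction bound
  have hBsubC : ∀ k m : ℕ, B k m ∩ V m 0 ⊆ (Sd k)ᶜ := by
    rintro k m ω ⟨hBω, hVω⟩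
    simp only [hB, Set.mem_setOf_eq] at hBω
    simp only [hSd, Set.mem_compl_iff, Set.mem_setOf_eq, not_not]
    rw [Hd_top]
    rintro m' ⟨hlt, hneg⟩
    rw [hBω] at hlt
    have hmm' : m < m' := by exact_mod_cast hlt
    have h0 : 0 ≤ X m ω := T5 k ω m hBω
    have hstay := stayUp ω m h0 (fun n h1 => hVω n h1) (m' - m)
    rw [show m + (m' - m) = m' by omega] at hstay
    exact absurd hneg (not_lt.mpr hstay)
  have hPVm : ∀ m, P (V m 0) = ε := fun m => hshift m 0
  have markov : ∀ k, P (Sd k) ≤ (1 - ε) * P (Su k) := by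
    intro k
    have hSdU : Sd k = ⋃ m, Sd k ∩ B k m := by
      calc Sd k = Sd k ∩ Su k := (Set.inter_eq_left.mpr (hSdSu k)).symm
      _ = ⋃ m, Sd k ∩ B k m := by rw [hSuU k, Set.inter_iUnion]
    have hcnt : P (Sd k) = ∑' m, P (Sd k ∩ B k m) := by
      conv_lhs => rw [hSdU]
      exact measure_iUnion
        (fun m m' h => ((Bdisj k) h).mono Set.inter_subset_right Set.inter_subset_right)
        (fun m => (measSd k).inter (measBa k m))
    have hterm : ∀ m, P (Sd k ∩ B k m) ≤ (1 - ε) * P (B k m) := by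
      intro m
      have hsub2 : Sd k ∩ B k m ⊆ B k m \ (B k m ∩ V m 0) := by
        rintro ω ⟨h1, h2⟩
        exact ⟨h2, fun hc => (hBsubC k m hc) h1⟩
      have hd : P (B k m \ (B k m ∩ V m 0)) = P (B k m) - P (B k m ∩ V m 0) :=
        measure_diff Set.inter_subset_left
          (((measBa k m).inter (measVa m 0)).nullMeasurableSet) (measure_ne_top P _)
      have hind : P (B k m ∩ V m 0) = P (B k m) * ε := by
        rw [((hblocks m).indepSet_of_measurableSet (measB k m)
          (measVn m 0)).measure_inter_eq_mul, hPVm m]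
      calc P (Sd k ∩ B k m) ≤ P (B k m \ (B k m ∩ V m 0)) := measure_mono hsub2
      _ = P (B k m) - P (B k m) * ε := by rw [hd, hind]
      _ = (1 - ε) * P (B k m) := by
          rw [ENNReal.sub_mul (fun _ _ => measure_ne_top P _), one_mul, mul_comm]
    calc P (Sd k) = ∑' m, P (Sd k ∩ B k m) := hcnt
    _ ≤ ∑' m, (1 - ε) * P (B k m) := ENNReal.tsum_le_tsum hterm
    _ = (1 - ε) * ∑' m, P (B k m) := ENNReal.tsum_mul_left
    _ = (1 - ε) * P (Su k) := by
        rw [← measure_iUnion (Bdisj k) (measBa k), ← hSuU k]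
  have decay : ∀ k, P (Su k) ≤ (1 - ε) ^ k := by
    intro k
    induction k with
    | zero => simpa using prob_le_one
    | succ k IH =>
      calc P (Su (k + 1)) ≤ P (Sd k) := measure_mono (hSuSd k)
      _ ≤ (1 - ε) * P (Su k) := markov k
      _ ≤ (1 - ε) * (1 - ε) ^ k := mul_le_mul_right IH _
      _ = (1 - ε) ^ (k + 1) := (pow_succ' _ _).symm
  have hT0 : P T = 0 := by
    have hlt1 : (1 - ε) < 1 := ENNReal.sub_lt_self one_ne_top one_ne_zero hεpos.ne'
    have htendpow := ENNReal.tendsto_pow_atTop_nhds_zero_of_lt_one hlt1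
    have hPT : ∀ k, P T ≤ (1 - ε) ^ k := fun k =>
      le_trans (measure_mono (Set.iInter_subset _ k)) (decay k)
    exact le_antisymm (ge_of_tendsto' htendpow hPT) zero_le
  -- the final decomposition events
  set Eup : ℕ → Set Ω := fun k => Su k \ Sd k with hEup
  set Edn : ℕ → Set Ω := fun k => Sd k \ Su (k + 1) with hEdn
  have measEup : ∀ k, MeasurableSet (Eup k) := fun k => (measSu k).diff (measSd k)
  have measEdn : ∀ k, MeasurableSet (Edn k) := fun k => (measSd k).diff (measSu (k + 1))
  have EupDisj : Pairwise (Function.onFun Disjoint Eup) := by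
    have key : ∀ {k k' : ℕ}, k < k' → Disjoint (Eup k) (Eup k') := by
      intro k k' h
      refine Set.disjoint_left.mpr fun ω h1 h2 => ?_
      exact h1.2 (hchain h h2.1)
    intro k k' hkk
    rcases lt_or_gt_of_ne hkk with h | h
    · exact key h
    · exact (key h).symm
  have EdnDisj : Pairwise (Function.onFun Disjoint Edn) := by
    have key : ∀ {k k' : ℕ}, k < k' → Disjoint (Edn k) (Edn k') := by
      intro k k' h
      refine Set.disjoint_left.mpr fun ω h1 h2 => ?_
      exact h1.2 (SuAnti (by omega : k + 1 ≤ k') (hSdSu k' h2.1))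
    intro k k' hkk
    rcases lt_or_gt_of_ne hkk with h | h
    · exact key h
    · exact (key h).symm
  have hnull : P (G0ᶜ ∪ T) = 0 := measure_union_null hG0 hT0
  have hae2 : ∀ᵐ ω ∂P, ω ∈ G0 ∧ ω ∉ T := by
    rw [ae_iff]
    refine measure_mono_null ?_ hnull
    intro ω hω
    simp only [Set.mem_setOf_eq, not_and, not_not] at hω
    by_cases hg : ω ∈ G0
    · exact Or.inr (hω hg)
    · exact Or.inl hg
  have goal1 : P {ω | Tendsto (fun n => X n ω) atTop atTop ∨
      Tendsto (fun n => X n ω) atTop atBot} = 1 := by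
    have hsub1 : {ω | Tendsto (fun n => X n ω) atTop atTop ∨
        Tendsto (fun n => X n ω) atTop atBot}ᶜ ⊆ G0ᶜ ∪ T := by
      intro ω hω
      rw [Set.mem_compl_iff, Set.mem_setOf_eq] at hω
      by_cases hg : ω ∈ G0
      · by_cases ht : ω ∈ T
        · exact Or.inr ht
        · exfalso
          obtain ⟨k, hk⟩ := cover ω ht
          cases hk with
          | inl h => exact hω (Or.inl (convUp k ω hg h.1 h.2))
          | inr h => exact hω (Or.inr (convDn k ω hg h.1 h.2))
      · exact Or.inl hg
    have hc0 : P ({ω | Tendsto (fun n => X n ω) atTop atTop ∨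
        Tendsto (fun n => X n ω) atTop atBot}ᶜ) = 0 := measure_mono_null hsub1 hnull
    have h1 : (1 : ℝ≥0∞) ≤ P {ω | Tendsto (fun n => X n ω) atTop atTop ∨
        Tendsto (fun n => X n ω) atTop atBot} := by
      have h2 := measure_union_le (μ := P)
        {ω | Tendsto (fun n => X n ω) atTop atTop ∨ Tendsto (fun n => X n ω) atTop atBot}
        ({ω | Tendsto (fun n => X n ω) atTop atTop ∨
          Tendsto (fun n => X n ω) atTop atBot}ᶜ)
      rw [Set.union_compl_self, measure_univ, hc0, add_zero] at h2
      exact h2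
    exact le_antisymm prob_le_one h1
  have haeqUp : {ω | Tendsto (fun n => X n ω) atTop atTop} =ᵐ[P] ⋃ k, Eup k := by
    rw [Filter.eventuallyEq_set]
    filter_upwards [hae2] with ω hω
    obtain ⟨hg, ht⟩ := hω
    constructor
    · intro htend
      obtain ⟨k, hk⟩ := cover ω ht
      cases hk with
      | inl h => exact Set.mem_iUnion.mpr ⟨k, h.1, h.2⟩
      | inr h => exact (not_tendsto_both htend (convDn k ω hg h.1 h.2)).elim
    · intro hmem
      obtain ⟨k, hk⟩ := Set.mem_iUnion.mp hmem
      exact convUp k ω hg hk.1 hk.2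
  have haeqDn : {ω | Tendsto (fun n => X n ω) atTop atBot} =ᵐ[P] ⋃ k, Edn k := by
    rw [Filter.eventuallyEq_set]
    filter_upwards [hae2] with ω hω
    obtain ⟨hg, ht⟩ := hω
    constructor
    · intro htend
      obtain ⟨k, hk⟩ := cover ω ht
      cases hk with
      | inl h => exact (not_tendsto_both (convUp k ω hg h.1 h.2) htend).elim
      | inr h => exact Set.mem_iUnion.mpr ⟨k, h.1, h.2⟩
    · intro hmem
      obtain ⟨k, hk⟩ := Set.mem_iUnion.mp hmem
      exact convDn k ω hg hk.1 hk.2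
  refine ⟨goal1, ?_, ?_⟩
  · rw [measure_congr haeqUp, measure_iUnion EupDisj measEup,
      ENNReal.tsum_toReal_eq (fun k => measure_ne_top P _)]
    refine tsum_congr fun k => ?_
    have hdk : P (Eup k) = P (Su k) - P (Sd k) := by
      rw [hEup]
      exact measure_diff (hSdSu k) (measSd k).nullMeasurableSet (measure_ne_top P _)
    rw [hdk, ENNReal.toReal_sub_of_le (measure_mono (hSdSu k)) (measure_ne_top P _)]
  · rw [measure_congr haeqDn, measure_iUnion EdnDisj measEdn,
      ENNReal.tsum_toReal_eq (fun k => measure_ne_top P _)]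
    refine tsum_congr fun k => ?_
    have hdk : P (Edn k) = P (Sd k) - P (Su (k + 1)) := by
      rw [hEdn]
      exact measure_diff (hSuSd k) (measSu (k + 1)).nullMeasurableSet (measure_ne_top P _)
    rw [hdk, ENNReal.toReal_sub_of_le (measure_mono (hSuSd k)) (measure_ne_top P _)]
end
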